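/- arXiv:1002.0629 — 8 statements merged into one kernel-verified Lean document; each statement's English description precedes it below -/
import Mathlib

section
/- Let e ≥ 3 and let m_1, …, m_e be positive integers with d = m_1 + … + m_e. Then the rational function Z(s) = (1/(ds+2))·(2 − e + Σ_{i=1}^e 1/(m_i·s+1)) ∈ ℚ(s) has a pole at s = −2/d, i.e. the order of Z at −2/d is negative. (Proposition 1.5, existence of the pole at −n/d for n = 2.) -/
open Polynomial

/-- The order of a rational function `Z ∈ ℚ(s)` at a point `α ∈ ℚ`: the integer `k`
such that `Z = (s-α)^k · (u/v)` with `u`, `v` not vanishing at `α`. -/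
noncomputable def orderAt (Z : RatFunc ℚ) (α : ℚ) : ℤ :=
  (rootMultiplicity α Z.num : ℤ) - (rootMultiplicity α Z.denom : ℤ)

/-!
Clearing denominators, `Z = P / Q` with `Q = (d s + 2) ∏ᵢ (mᵢ s + 1)`, which vanishes at
`α = -2/d`, so it suffices that `P(α) ≠ 0`. Writing `gᵢ = mᵢ α + 1 = 1 - 2mᵢ/d`, one finds
`P(α) = 2 (∏ᵢ gᵢ + ∑ⱼ (mⱼ/d) ∏_{i ≠ j} gᵢ)`. Since `e ≥ 3`, `gⱼ + gₖ = 2(d - mⱼ - mₖ)/d > 0`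
for `j ≠ k`, so at most one `gₖ` is nonpositive. If one is, each term with `j ≠ k` exceeds
`-(mⱼ/d) ∏_{i ≠ k} gᵢ`, and these bounds add up to exactly minus the two terms involving `k`
(as `∑_{j ≠ k} mⱼ = d - mₖ`), so `P(α) > 0`.
-/

open Finset

theorem orderAt_algebraMap_div {P Q : ℚ[X]} (hP : P ≠ 0) (hQ : Q ≠ 0) (α : ℚ) :
    orderAt (algebraMap ℚ[X] (RatFunc ℚ) P / algebraMap ℚ[X] (RatFunc ℚ) Q) α =
      rootMultiplicity α P - rootMultiplicity α Q := by
  set Z := algebraMap ℚ[X] (RatFunc ℚ) P / algebraMap ℚ[X] (RatFunc ℚ) Q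
  have hZ : Z ≠ 0 := div_ne_zero (RatFunc.algebraMap_ne_zero hP) (RatFunc.algebraMap_ne_zero hQ)
  have hcross : Z.num * Q = P * Z.denom := (RatFunc.num_mul_eq_mul_denom_iff hQ).mpr rfl
  have hmult := congrArg (rootMultiplicity α) hcross
  rw [rootMultiplicity_mul (mul_ne_zero (RatFunc.num_ne_zero hZ) hQ),
    rootMultiplicity_mul (mul_ne_zero hP (RatFunc.denom_ne_zero Z))] at hmult
  unfold orderAt
  omega

theorem orderAt_algebraMap_div_neg {P Q : ℚ[X]} {α : ℚ} (hQ : Q ≠ 0) (hQα : Q.IsRoot α)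
    (hPα : ¬ P.IsRoot α) :
    orderAt (algebraMap ℚ[X] (RatFunc ℚ) P / algebraMap ℚ[X] (RatFunc ℚ) Q) α < 0 := by
  rw [orderAt_algebraMap_div (fun h => hPα (by simp [h])) hQ, rootMultiplicity_eq_zero hPα]
  have := (rootMultiplicity_pos hQ).mpr hQα
  omega

theorem sum_inv_eq_sum_prod_erase_div {K ι : Type*} [Field K] [Fintype ι] [DecidableEq ι]
    {v : ι → K} (hv : ∀ i, v i ≠ 0) :
    ∑ i, (v i)⁻¹ = (∑ j, ∏ i ∈ univ.erase j, v i) / ∏ i, v i := by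
  rw [sum_div]
  refine sum_congr rfl fun j _ => ?_
  rw [← mul_prod_erase univ v (mem_univ j),
    div_mul_cancel_right₀ (prod_ne_zero_iff.mpr fun i _ => hv i)]

theorem sum_prod_erase_eq_card_mul_prod_add {R ι : Type*} [CommRing R] [Fintype ι]
    [DecidableEq ι] (g : ι → R) :
    ∑ j, ∏ i ∈ univ.erase j, g i =
      Fintype.card ι * ∏ i, g i + ∑ j, (1 - g j) * ∏ i ∈ univ.erase j, g i := by
  have hterm : ∀ j, ∏ i ∈ univ.erase j, g i = ∏ i, g i + (1 - g j) * ∏ i ∈ univ.erase j, g i :=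
    fun j => by rw [← mul_prod_erase univ g (mem_univ j)]; ring
  rw [sum_congr rfl fun j _ => hterm j, sum_add_distrib, sum_const, card_univ, nsmul_eq_mul]

theorem prod_add_sum_mul_prod_erase_pos {K ι : Type*} [Field K] [LinearOrder K]
    [IsStrictOrderedRing K] [Fintype ι] [DecidableEq ι] [Nontrivial ι] {a w : ι → K}
    (hw : ∀ i, 0 < w i) (ha : ∀ j k, j ≠ k → 0 < a j + a k)
    (hsum : ∀ k, ∑ j ∈ univ.erase k, w j ≤ a k + w k) :
    0 < ∏ i, a i + ∑ j, w j * ∏ i ∈ univ.erase j, a i := by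
  by_cases hpos : ∀ i, 0 < a i
  · have hprod : ∀ s : Finset ι, 0 < ∏ i ∈ s, a i := fun s => prod_pos fun i _ => hpos i
    exact add_pos_of_pos_of_nonneg (hprod univ)
      (sum_nonneg fun j _ => (mul_pos (hw j) (hprod _)).le)
  push Not at hpos
  obtain ⟨k, hk⟩ := hpos
  have hothers : ∀ j ∈ univ.erase k, 0 < a j := fun j hj => by
    linarith [ha j k (ne_of_mem_erase hj)]
  set Pk := ∏ i ∈ univ.erase k, a i
  have hPk : 0 < Pk := prod_pos hothers
  -- `∏_{i ≠ j} a i + Pk = (a k + a j) * ∏_{i ≠ j, k} a i`, and `a k + a j > 0`.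
  have hterm : ∀ j ∈ univ.erase k, -(w j * Pk) < w j * ∏ i ∈ univ.erase j, a i := by
    intro j hj
    have hkj : k ∈ univ.erase j := mem_erase.mpr ⟨(ne_of_mem_erase hj).symm, mem_univ k⟩
    have hR : 0 < ∏ i ∈ (univ.erase k).erase j, a i :=
      prod_pos fun i hi => hothers i (mem_of_mem_erase hi)
    have hPk_eq : Pk = a j * ∏ i ∈ (univ.erase k).erase j, a i := (mul_prod_erase _ a hj).symm
    rw [← mul_prod_erase _ a hkj, erase_right_comm, hPk_eq]
    linarith [mul_pos (mul_pos (hw j) hR) (ha j k (ne_of_mem_erase hj))]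
  have hsum_k : -((a k + w k) * Pk) < ∑ j ∈ univ.erase k, w j * ∏ i ∈ univ.erase j, a i :=
    calc -((a k + w k) * Pk) ≤ ∑ j ∈ univ.erase k, -(w j * Pk) := by
          rw [sum_neg_distrib, ← sum_mul, neg_le_neg_iff]
          exact mul_le_mul_of_nonneg_right (hsum k) hPk.le
      _ < _ := sum_lt_sum_of_nonempty (univ_nontrivial.erase_nonempty) hterm
  rw [← mul_prod_erase univ a (mem_univ k), ← add_sum_erase univ _ (mem_univ k)]
  linarith

theorem add_lt_sum_of_ne {ι M : Type*} [Fintype ι] [DecidableEq ι] [AddCommMonoid M]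
    [PartialOrder M] [IsOrderedCancelAddMonoid M] (hι : 3 ≤ Fintype.card ι) {f : ι → M}
    (hf : ∀ i, 0 < f i) {j k : ι} (hjk : j ≠ k) : f j + f k < ∑ i, f i := by
  have hcard : ({j, k} : Finset ι).card < (univ : Finset ι).card := by
    rw [card_pair hjk, card_univ]; omega
  obtain ⟨l, -, hl⟩ := exists_mem_notMem_of_card_lt_card hcard
  rw [← sum_pair hjk]
  exact sum_lt_sum_of_subset (subset_univ _) (mem_univ l) hl (hf l) fun i _ _ => (hf i).le

section zeta

variable {ι : Type*} [Fintype ι]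

noncomputable def zetaDen (m : ι → ℕ) (d : ℕ) : ℚ[X] :=
  ((d : ℚ[X]) * X + 2) * ∏ i, ((m i : ℚ[X]) * X + 1)

theorem natCast_mul_X_add_one_ne_zero (m : ℕ) : (m : ℚ[X]) * X + 1 ≠ 0 :=
  fun h => by simpa using congrArg (eval 0) h

theorem zetaDen_ne_zero (m : ι → ℕ) (d : ℕ) : zetaDen m d ≠ 0 :=
  mul_ne_zero (fun h => by simpa using congrArg (eval 0) h)
    (prod_ne_zero_iff.mpr fun i _ => natCast_mul_X_add_one_ne_zero (m i))

theorem zetaDen_isRoot (m : ι → ℕ) {d : ℕ} (hd : d ≠ 0) : (zetaDen m d).IsRoot (-2 / d) := by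
  have hroot : (d : ℚ) * (-2 / d) + 2 = 0 := by field_simp; ring
  simp only [zetaDen, IsRoot.def, eval_mul, eval_add, eval_natCast, eval_X, eval_ofNat, hroot,
    zero_mul]

variable [DecidableEq ι]

noncomputable def zetaNum (m : ι → ℕ) : ℚ[X] :=
  (2 - Fintype.card ι) * ∏ i, ((m i : ℚ[X]) * X + 1) +
    ∑ j, ∏ i ∈ univ.erase j, ((m i : ℚ[X]) * X + 1)

theorem one_div_mul_eq_zetaNum_div_zetaDen (m : ι → ℕ) (d : ℕ) :
    1 / ((d : RatFunc ℚ) * RatFunc.X + 2) *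
        ((2 : RatFunc ℚ) - (Fintype.card ι : RatFunc ℚ) +
          ∑ i, 1 / ((m i : RatFunc ℚ) * RatFunc.X + 1)) =
      algebraMap ℚ[X] (RatFunc ℚ) (zetaNum m) / algebraMap ℚ[X] (RatFunc ℚ) (zetaDen m d) := by
  have hV : ∀ i, (m i : RatFunc ℚ) * RatFunc.X + 1 ≠ 0 := fun i => by
    simpa using RatFunc.algebraMap_ne_zero (natCast_mul_X_add_one_ne_zero (m i))
  have hprod := prod_ne_zero_iff.mpr fun i (_ : i ∈ univ) => hV i
  simp only [zetaNum, zetaDen, map_add, map_mul, map_sub, map_prod, map_sum, map_natCast,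
    map_ofNat, map_one, RatFunc.algebraMap_X, one_div]
  rw [sum_inv_eq_sum_prod_erase_div hV, add_div' _ _ _ hprod, inv_mul_eq_div,
    div_mul_eq_div_div_swap]

theorem eval_zetaNum (m : ι → ℕ) (α : ℚ) :
    eval α (zetaNum m) = 2 * (∏ i, (m i * α + 1) +
      ∑ j, (-α * m j / 2) * ∏ i ∈ univ.erase j, (m i * α + 1)) := by
  simp only [zetaNum, eval_add, eval_mul, eval_sub, eval_prod, eval_finsetSum, eval_natCast,
    eval_ofNat, eval_X, eval_one]
  have hcoeff : ∀ j, 1 - (m j * α + 1) = 2 * (-α * m j / 2) := fun j => by ring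
  rw [sum_prod_erase_eq_card_mul_prod_add]
  simp only [hcoeff, mul_assoc, ← mul_sum]
  ring

theorem eval_zetaNum_pos (hι : 3 ≤ Fintype.card ι) {m : ι → ℕ} (hm : ∀ i, 0 < m i) {d : ℕ}
    (hd : d = ∑ i, m i) : 0 < eval (-2 / (d : ℚ)) (zetaNum m) := by
  have : Nontrivial ι := Fintype.one_lt_card_iff_nontrivial.mp (by omega)
  have hd0 : (0 : ℚ) < d := by
    rw [hd]; push_cast; exact sum_pos (fun i _ => by exact_mod_cast hm i) univ_nonempty
  have hweight : ∀ j, -(-2 / (d : ℚ)) * m j / 2 = m j / d := fun j => by ring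
  rw [eval_zetaNum]
  simp only [hweight]
  refine mul_pos two_pos (prod_add_sum_mul_prod_erase_pos
    (fun i => div_pos (by exact_mod_cast hm i) hd0) (fun j k hjk => ?_) (fun k => ?_))
  · have hjk : (m j + m k : ℚ) < d := by exact_mod_cast hd ▸ add_lt_sum_of_ne hι hm hjk
    field_simp
    linarith
  · have hk : ∑ j ∈ univ.erase k, (m j : ℚ) = d - m k := by
      rw [sum_erase_eq_sub (mem_univ k), hd]; push_cast; rfl
    rw [← sum_div, hk]
    field_simp
    linarith

end zeta

/-- Proposition 1.5 (existence of the pole at `-n/d` for `n = 2`): for `e ≥ 3` lines with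
positive multiplicities `m₁, …, m_e` summing to `d`, the rational function
`Z(s) = (1/(ds+2)) · (2 - e + Σᵢ 1/(mᵢ s + 1))` has a pole at `s = -2/d`. -/
theorem statement0 (e : ℕ) (he : 3 ≤ e) (m : Fin e → ℕ) (hm : ∀ i, 0 < m i)
    (d : ℕ) (hd : d = ∑ i, m i)
    (Z : RatFunc ℚ)
    (hZ : Z = 1 / ((d : RatFunc ℚ) * RatFunc.X + 2) *
      ((2 : RatFunc ℚ) - (e : RatFunc ℚ) +
        ∑ i, 1 / ((m i : RatFunc ℚ) * RatFunc.X + 1))) :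
    orderAt Z (-2 / (d : ℚ)) < 0 := by
  have hd0 : d ≠ 0 := by
    rw [hd]; exact (sum_pos (fun i _ => hm i) (univ_nonempty_iff.mpr ⟨⟨0, by omega⟩⟩)).ne'
  have hcard : 3 ≤ Fintype.card (Fin e) := by rwa [Fintype.card_fin]
  have hZPQ := one_div_mul_eq_zetaNum_div_zetaDen m d
  rw [Fintype.card_fin] at hZPQ
  rw [hZ, hZPQ]
  exact orderAt_algebraMap_div_neg (zetaDen_ne_zero m d) (zetaDen_isRoot m hd0)
    (eval_zetaNum_pos hcard hm hd).ne'
end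

section
/- Let e ≥ 3 and let m_1, …, m_e be positive integers with d = m_1 + … + m_e, and assume 2·m_i ≠ d for every i. Set C = 2 − e + Σ_{i=1}^e d/(d − 2·m_i) (a rational number). Then C > 0 if 2·m_i < d for every i, and C < 0 if 2·m_j > d for some j. (Proposition 1.5, sign of the coefficient C_{−2/d}.) -/
/-!
Since `d / (d - 2mᵢ) = 1 + 2mᵢ / (d - 2mᵢ)`, the coefficient is `C = 2 + Σᵢ 2mᵢ / (d - 2mᵢ)`.
If every `2mᵢ < d` all summands are nonnegative, so `C ≥ 2`. If `2mⱼ > d`, put `t = 2mⱼ - d > 0`;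
a third positive multiplicity gives `mᵢ + mⱼ < d`, i.e. `d - 2mᵢ > t`, for every `i ≠ j`, so
`Σᵢ 2mᵢ / (d - 2mᵢ) < -2mⱼ / t + Σ_{i ≠ j} 2mᵢ / t = 2(d - 2mⱼ) / t = -2`.
-/

open Finset

section SignOfCoefficient

variable {ι K : Type*} [Fintype ι] [Field K]

theorem two_sub_card_add_sum_div_eq {d : K} {m : ι → K} (h : ∀ i, d - 2 * m i ≠ 0) :
    2 - Fintype.card ι + ∑ i, d / (d - 2 * m i) = 2 + ∑ i, 2 * m i / (d - 2 * m i) := by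
  have hsplit (i : ι) : d / (d - 2 * m i) = 1 + 2 * m i / (d - 2 * m i) := by
    field_simp [h i]
    ring
  simp only [hsplit, sum_add_distrib, sum_const, card_univ, nsmul_eq_mul, mul_one]
  ring

variable [LinearOrder K] [IsStrictOrderedRing K]

theorem two_sub_card_add_sum_div_pos {d : K} {m : ι → K} (hm : ∀ i, 0 ≤ m i)
    (hlt : ∀ i, 2 * m i < d) : 0 < 2 - Fintype.card ι + ∑ i, d / (d - 2 * m i) := by
  rw [two_sub_card_add_sum_div_eq fun i ↦ (sub_pos.2 (hlt i)).ne']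
  have : 0 ≤ ∑ i, 2 * m i / (d - 2 * m i) :=
    sum_nonneg fun i _ ↦ div_nonneg (by linarith [hm i]) (sub_pos.2 (hlt i)).le
  linarith

theorem add_lt_sum_of_three_le_card {m : ι → K} (hm : ∀ i, 0 < m i)
    (hι : 3 ≤ Fintype.card ι) {i j : ι} (hij : i ≠ j) : m i + m j < ∑ k, m k := by
  classical
  obtain ⟨k, -, hk⟩ : ∃ k ∈ univ, k ∉ ({i, j} : Finset ι) :=
    exists_mem_notMem_of_card_lt_card <| by
      rw [card_univ, card_pair hij]
      omega
  rw [← sum_pair hij]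
  exact sum_lt_sum_of_subset (subset_univ _) (mem_univ k) hk (hm k) fun l _ _ ↦ (hm l).le

theorem sum_two_mul_div_lt_neg_two {m : ι → K} (hm : ∀ i, 0 < m i)
    (hι : 3 ≤ Fintype.card ι) {j : ι} (hj : ∑ k, m k < 2 * m j) :
    ∑ i, 2 * m i / (∑ k, m k - 2 * m i) < -2 := by
  classical
  have hsum_rest : ∑ i ∈ univ.erase j, m i = ∑ k, m k - m j := by
    rw [← add_sum_erase univ m (mem_univ j)]
    ring
  set d := ∑ k, m k
  set t := 2 * m j - d
  have ht : 0 < t := sub_pos.2 hj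
  have hrest : ∑ i ∈ univ.erase j, 2 * m i / (d - 2 * m i) < ∑ i ∈ univ.erase j, 2 * m i / t := by
    refine sum_lt_sum_of_nonempty ?_ fun i hi ↦ ?_
    · rw [← card_pos, card_erase_of_mem (mem_univ j), card_univ]
      omega
    · have hpair := add_lt_sum_of_three_le_card hm hι (ne_of_mem_erase hi)
      exact div_lt_div_of_pos_left (by linarith [hm i]) ht (by linarith)
  calc ∑ i, 2 * m i / (d - 2 * m i)
      = -(2 * m j / t) + ∑ i ∈ univ.erase j, 2 * m i / (d - 2 * m i) := by
        rw [← add_sum_erase _ _ (mem_univ j), ← div_neg]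
        congr 2
        ring
    _ < -(2 * m j / t) + ∑ i ∈ univ.erase j, 2 * m i / t := by gcongr
    _ = -2 := by
        rw [← sum_div, ← mul_sum, hsum_rest]
        field_simp
        ring

theorem two_sub_card_add_sum_div_neg {m : ι → K} (hm : ∀ i, 0 < m i)
    (hι : 3 ≤ Fintype.card ι) {j : ι} (hj : ∑ k, m k < 2 * m j) :
    2 - Fintype.card ι + ∑ i, (∑ k, m k) / (∑ k, m k - 2 * m i) < 0 := by
  have hne (i : ι) : ∑ k, m k - 2 * m i ≠ 0 := by
    rcases eq_or_ne i j with rfl | hij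
    · linarith
    · linarith [add_lt_sum_of_three_le_card hm hι hij, hm j]
  rw [two_sub_card_add_sum_div_eq hne]
  linarith [sum_two_mul_div_lt_neg_two hm hι hj]

end SignOfCoefficient

theorem statement1_general (e : ℕ) (he : 3 ≤ e) (m : Fin e → ℕ) (hm : ∀ i, 0 < m i)
    (d : ℕ) (hd : d = ∑ i, m i)
    (C : ℚ) (hC : C = 2 - (e : ℚ) + ∑ i, (d : ℚ) / ((d : ℚ) - 2 * (m i : ℚ))) :
    ((∀ i, 2 * m i < d) → 0 < C) ∧ ((∃ j, d < 2 * m j) → C < 0) := by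
  have hdQ : (d : ℚ) = ∑ i, (m i : ℚ) := by rw [hd]; push_cast; rfl
  have he' : (e : ℚ) = Fintype.card (Fin e) := by simp
  rw [he'] at hC
  refine ⟨fun hlt ↦ ?_, fun ⟨j, hj⟩ ↦ ?_⟩
  · rw [hC]
    exact two_sub_card_add_sum_div_pos (fun i ↦ (m i).cast_nonneg) fun i ↦ by exact_mod_cast hlt i
  · have hjQ : ∑ i, (m i : ℚ) < 2 * m j := by rw [← hdQ]; exact_mod_cast hj
    rw [hC, hdQ]
    exact two_sub_card_add_sum_div_neg (fun i ↦ by exact_mod_cast hm i) (by simpa using he) hjQ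

/-- Proposition 1.5 (sign of the coefficient `C_{-2/d}`): for `e ≥ 3` lines with positive
multiplicities `m₁, …, m_e` summing to `d`, with `2mᵢ ≠ d` for all `i`, the coefficient
`C = 2 - e + Σᵢ d/(d - 2mᵢ)` is positive if `2mᵢ < d` for every `i` (i.e. the origin is a
good dense edge) and negative if `2mⱼ > d` for some `j`. -/
theorem statement1 (e : ℕ) (he : 3 ≤ e) (m : Fin e → ℕ) (hm : ∀ i, 0 < m i)
    (d : ℕ) (hd : d = ∑ i, m i) (hne : ∀ i, 2 * m i ≠ d)
    (C : ℚ) (hC : C = 2 - (e : ℚ) + ∑ i, (d : ℚ) / ((d : ℚ) - 2 * (m i : ℚ))) :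
    ((∀ i, 2 * m i < d) → 0 < C) ∧ ((∃ j, d < 2 * m j) → C < 0) :=
  statement1_general e he m hm d hd C hC
end

section
/- Let e ≥ 3 and let m_1, …, m_e be positive integers with d = m_1 + … + m_e. The rational function Z(s) = (1/(ds+2))·(2 − e + Σ_{i=1}^e 1/(m_i·s+1)) ∈ ℚ(s) has a pole of order exactly 2 at s = −2/d if and only if 2·m_i = d for some i; moreover the order of the pole of Z at −2/d never exceeds 2. -/
open Polynomial

lemma orderAt_div_aux (p q : ℚ[X]) (hp : p ≠ 0) (hq : q ≠ 0) (α : ℚ) :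
    orderAt (algebraMap ℚ[X] (RatFunc ℚ) p / algebraMap ℚ[X] (RatFunc ℚ) q) α
      = (rootMultiplicity α p : ℤ) - (rootMultiplicity α q : ℤ) := by
  set Z : RatFunc ℚ := algebraMap ℚ[X] (RatFunc ℚ) p / algebraMap ℚ[X] (RatFunc ℚ) q with hZ
  have hZ0 : Z ≠ 0 := div_ne_zero (RatFunc.algebraMap_ne_zero hp) (RatFunc.algebraMap_ne_zero hq)
  have hnum : Z.num ≠ 0 := RatFunc.num_ne_zero hZ0
  have hden : Z.denom ≠ 0 := RatFunc.denom_ne_zero Z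
  have hcross : Z.num * q = Z.denom * p := by
    apply RatFunc.algebraMap_injective
    rw [map_mul, map_mul]
    have h1 : algebraMap ℚ[X] (RatFunc ℚ) Z.num / algebraMap ℚ[X] (RatFunc ℚ) Z.denom = Z :=
      RatFunc.num_div_denom Z
    rw [hZ] at h1
    rw [div_eq_div_iff (RatFunc.algebraMap_ne_zero hden) (RatFunc.algebraMap_ne_zero hq)] at h1
    linear_combination h1
  have h2 := congrArg (rootMultiplicity α) hcross
  rw [rootMultiplicity_mul (mul_ne_zero hnum hq),
      rootMultiplicity_mul (mul_ne_zero hden hp)] at h2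
  unfold orderAt
  omega

lemma rm_prod {ι : Type*} (α : ℚ) (s : Finset ι) (f : ι → ℚ[X]) (h : ∀ i ∈ s, f i ≠ 0) :
    rootMultiplicity α (∏ i ∈ s, f i) = ∑ i ∈ s, rootMultiplicity α (f i) := by
  classical
  induction s using Finset.cons_induction with
  | empty => simp [Polynomial.rootMultiplicity_eq_zero (by simp : ¬IsRoot 1 α)]
  | cons a s ha ih =>
      rw [Finset.prod_cons, Finset.sum_cons,
        rootMultiplicity_mul (mul_ne_zero (h a (Finset.mem_cons_self a s))
          (Finset.prod_ne_zero_iff.mpr fun i hi' => h i (Finset.mem_cons_of_mem hi'))),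
        ih (fun i hi' => h i (Finset.mem_cons_of_mem hi'))]

lemma rm_linear (a b α : ℚ) (ha : a ≠ 0) (h : a * α + b = 0) :
    rootMultiplicity α (C a * X + C b) = 1 := by
  have heq : C a * X + C b = C a * (X - C α) := by
    have hb : b = -(a * α) := by linarith
    rw [hb, mul_sub, ← C_mul, map_neg]
    ring
  rw [heq, rootMultiplicity_mul (mul_ne_zero (by simpa using ha) (X_sub_C_ne_zero α)),
    rootMultiplicity_C, rootMultiplicity_X_sub_C_self, zero_add]

/-- For `e ≥ 3` lines with positive multiplicities `m₁, …, m_e` summing to `d`, the rational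
function `Z(s) = (1/(ds+2)) · (2 - e + Σᵢ 1/(mᵢ s + 1))` has a pole of order exactly `2` at
`s = -2/d` if and only if `2mᵢ = d` for some `i`; and the order of the pole at `-2/d`
never exceeds `2`. -/
theorem statement2 (e : ℕ) (he : 3 ≤ e) (m : Fin e → ℕ) (hm : ∀ i, 0 < m i)
    (d : ℕ) (hd : d = ∑ i, m i)
    (Z : RatFunc ℚ)
    (hZ : Z = 1 / ((d : RatFunc ℚ) * RatFunc.X + 2) *
      ((2 : RatFunc ℚ) - (e : RatFunc ℚ) +
        ∑ i, 1 / ((m i : RatFunc ℚ) * RatFunc.X + 1))) :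
    (orderAt Z (-2 / (d : ℚ)) = -2 ↔ ∃ i, 2 * m i = d) ∧
      -2 ≤ orderAt Z (-2 / (d : ℚ)) := by
  classical
  have hd0 : 0 < d := by
    rw [hd]
    exact Finset.sum_pos (fun i _ => hm i) ⟨⟨0, by omega⟩, Finset.mem_univ _⟩
  have hdQ : (d : ℚ) ≠ 0 := Nat.cast_ne_zero.mpr hd0.ne'
  set α : ℚ := -2 / (d : ℚ) with hα
  -- the polynomials
  set q : Fin e → ℚ[X] := fun i => C (m i : ℚ) * X + C 1 with hqdef
  set q0 : ℚ[X] := C (d : ℚ) * X + C 2 with hq0def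
  have hqne : ∀ i, q i ≠ 0 := by
    intro i h
    have := congrArg (eval 0) h
    simp [hqdef] at this
  have hq0ne : q0 ≠ 0 := by
    intro h
    have := congrArg (eval 0) h
    simp [hq0def] at this
  set P : ℚ[X] := C ((2 : ℚ) - e) * ∏ i, q i + ∑ i, ∏ j ∈ Finset.univ.erase i, q j with hPdef
  set Q : ℚ[X] := q0 * ∏ i, q i with hQdef
  have hQne : Q ≠ 0 := mul_ne_zero hq0ne (Finset.prod_ne_zero_iff.mpr fun i _ => hqne i)
  -- evaluation facts
  have hval : ∀ i, eval α (q i) = (m i : ℚ) * α + 1 := by intro i; simp [hqdef]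
  have hkey : ∀ i, ((m i : ℚ) * α + 1 = 0 ↔ 2 * m i = d) := by
    intro i
    rw [hα]
    constructor
    · intro h
      have h2 : (m i : ℚ) * (-2) + (d : ℚ) = 0 := by
        field_simp at h
        linarith
      have : ((2 * m i : ℕ) : ℚ) = (d : ℚ) := by push_cast; linarith
      exact_mod_cast this
    · intro h
      have : ((2 * m i : ℕ) : ℚ) = (d : ℚ) := by exact_mod_cast h
      push_cast at this
      field_simp
      linarith
  have hPne : P ≠ 0 := by
    intro h
    have h0 := congrArg (eval 0) h
    rw [hPdef] at h0
    simp [eval_finset_sum, eval_prod, hqdef] at h0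
  -- uniqueness of the index with 2 m i = d
  have huniq : ∀ i j, 2 * m i = d → 2 * m j = d → i = j := by
    intro i j hi hj
    by_contra hij
    obtain ⟨k, hk⟩ : ∃ k, k ∉ ({i, j} : Finset (Fin e)) := by
      by_contra hcon
      push_neg at hcon
      have hsub : (Finset.univ : Finset (Fin e)) ⊆ {i, j} := fun x _ => hcon x
      have := Finset.card_le_card hsub
      simp only [Finset.card_univ, Fintype.card_fin] at this
      have h2 : ({i, j} : Finset (Fin e)).card ≤ 2 := Finset.card_insert_le _ _ |>.trans (by simp)
      omega
    have hlt : m i + m j < d := by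
      rw [hd]
      have := Finset.sum_lt_sum_of_subset (Finset.subset_univ ({i, j} : Finset (Fin e)))
        (Finset.mem_univ k) hk (hm k) (fun _ _ _ => Nat.zero_le _)
      rwa [Finset.sum_pair hij] at this
    omega
  -- Z as a quotient of polynomials
  have hg : ∀ i, algebraMap ℚ[X] (RatFunc ℚ) (q i) = (m i : RatFunc ℚ) * RatFunc.X + 1 := by
    intro i
    simp [hqdef, map_add, map_mul, map_natCast, map_one, RatFunc.algebraMap_X]
  have hg0 : algebraMap ℚ[X] (RatFunc ℚ) q0 = (d : RatFunc ℚ) * RatFunc.X + 2 := by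
    simp [hq0def, map_add, map_mul, map_natCast, map_ofNat, RatFunc.algebraMap_X]
  have hgne : ∀ i, ((m i : RatFunc ℚ) * RatFunc.X + 1) ≠ 0 := by
    intro i
    rw [← hg i]
    exact RatFunc.algebraMap_ne_zero (hqne i)
  have hg0ne : ((d : RatFunc ℚ) * RatFunc.X + 2) ≠ 0 := by
    rw [← hg0]
    exact RatFunc.algebraMap_ne_zero hq0ne
  have hZdiv : Z = algebraMap ℚ[X] (RatFunc ℚ) P / algebraMap ℚ[X] (RatFunc ℚ) Q := by
    rw [hZ, eq_div_iff (RatFunc.algebraMap_ne_zero hQne), hQdef, map_mul, hg0]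
    rw [hPdef, map_add, map_mul]
    have hprod : algebraMap ℚ[X] (RatFunc ℚ) (∏ i, q i)
        = ∏ i, ((m i : RatFunc ℚ) * RatFunc.X + 1) := by
      rw [map_prod]; exact Finset.prod_congr rfl fun i _ => hg i
    have hC : algebraMap ℚ[X] (RatFunc ℚ) (C ((2 : ℚ) - e))
        = (2 : RatFunc ℚ) - (e : RatFunc ℚ) := by
      rw [map_sub, map_ofNat, map_natCast]
      simp [map_sub, map_ofNat, map_natCast]
    have hsum : algebraMap ℚ[X] (RatFunc ℚ) (∑ i, ∏ j ∈ Finset.univ.erase i, q j)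
        = ∑ i, ∏ j ∈ Finset.univ.erase i, ((m j : RatFunc ℚ) * RatFunc.X + 1) := by
      rw [map_sum]
      exact Finset.sum_congr rfl fun i _ => by
        rw [map_prod]; exact Finset.prod_congr rfl fun j _ => hg j
    rw [hprod, hC, hsum]
    set g : Fin e → RatFunc ℚ := fun i => (m i : RatFunc ℚ) * RatFunc.X + 1 with hgdef
    set g0 : RatFunc ℚ := (d : RatFunc ℚ) * RatFunc.X + 2 with hg0def'
    have step1 : 1 / g0 * ((2 : RatFunc ℚ) - e + ∑ i, 1 / g i) * (g0 * ∏ i, g i)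
        = ((2 : RatFunc ℚ) - e + ∑ i, 1 / g i) * ∏ i, g i := by
      field_simp
    rw [step1, add_mul, Finset.sum_mul]
    congr 1
    refine Finset.sum_congr rfl fun i _ => ?_
    rw [← Finset.mul_prod_erase Finset.univ g (Finset.mem_univ i), one_div,
      inv_mul_cancel_left₀ (hgne i)]
  -- compute the order
  have horder : orderAt Z α = (rootMultiplicity α P : ℤ) - (rootMultiplicity α Q : ℤ) := by
    rw [hZdiv]; exact orderAt_div_aux P Q hPne hQne α
  have hrmq0 : rootMultiplicity α q0 = 1 := by
    apply rm_linear _ _ _ hdQ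
    rw [hα]; field_simp; ring
  have hrmqi : ∀ i, rootMultiplicity α (q i) = if 2 * m i = d then 1 else 0 := by
    intro i
    by_cases h : 2 * m i = d
    · rw [if_pos h]
      exact rm_linear _ _ _ (Nat.cast_ne_zero.mpr (hm i).ne') ((hkey i).mpr h)
    · rw [if_neg h]
      apply rootMultiplicity_eq_zero
      intro hroot
      exact h ((hkey i).mp (by rw [← hval i]; exact hroot))
  have hrmQ : (rootMultiplicity α Q : ℤ)
      = 1 + ∑ i, (rootMultiplicity α (q i) : ℤ) := by
    rw [hQdef, rootMultiplicity_mul (mul_ne_zero hq0ne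
      (Finset.prod_ne_zero_iff.mpr fun i _ => hqne i)), hrmq0,
      rm_prod α Finset.univ q (fun i _ => hqne i)]
    push_cast
    ring
  constructor
  · constructor
    · intro hord
      by_contra hex
      push_neg at hex
      have hsum0 : ∑ i, (rootMultiplicity α (q i) : ℤ) = 0 := by
        apply Finset.sum_eq_zero
        intro i _
        rw [hrmqi i, if_neg (hex i)]
        simp
      rw [horder, hrmQ, hsum0] at hord
      omega
    · rintro ⟨i₀, hi₀⟩
      have hsum1 : ∑ i, (rootMultiplicity α (q i) : ℤ) = 1 := by
        rw [Finset.sum_eq_single i₀]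
        · rw [hrmqi i₀, if_pos hi₀]; simp
        · intro j _ hj
          rw [hrmqi j, if_neg (fun h => hj (huniq j i₀ h hi₀))]
          simp
        · intro h; exact absurd (Finset.mem_univ i₀) h
      have hrmP : rootMultiplicity α P = 0 := by
        apply rootMultiplicity_eq_zero
        intro hroot
        unfold IsRoot at hroot
        rw [hPdef] at hroot
        simp only [eval_add, eval_mul, eval_C, eval_prod, eval_finset_sum] at hroot
        have hvz : eval α (q i₀) = 0 := by rw [hval i₀]; exact (hkey i₀).mpr hi₀
        rw [Finset.prod_eq_zero (Finset.mem_univ i₀) hvz, mul_zero, zero_add] at hroot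
        rw [Finset.sum_eq_single i₀] at hroot
        · refine absurd hroot (Finset.prod_ne_zero_iff.mpr fun j hj => ?_)
          rw [hval j]
          intro h0
          exact (Finset.ne_of_mem_erase hj) (huniq j i₀ ((hkey j).mp h0) hi₀)
        · intro j _ hj
          exact Finset.prod_eq_zero (Finset.mem_erase.mpr ⟨Ne.symm hj, Finset.mem_univ i₀⟩) hvz
        · intro h; exact absurd (Finset.mem_univ i₀) h
      rw [horder, hrmQ, hsum1, hrmP]
      norm_num
  · rw [horder, hrmQ]
    have hsumle : ∑ i, (rootMultiplicity α (q i) : ℤ) ≤ 1 := by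
      by_cases hex : ∃ i, 2 * m i = d
      · obtain ⟨i₀, hi₀⟩ := hex
        rw [Finset.sum_eq_single i₀]
        · rw [hrmqi i₀, if_pos hi₀]; simp
        · intro j _ hj
          rw [hrmqi j, if_neg (fun h => hj (huniq j i₀ h hi₀))]; simp
        · intro h; exact absurd (Finset.mem_univ i₀) h
      · push_neg at hex
        rw [Finset.sum_eq_zero (fun i _ => by rw [hrmqi i, if_neg (hex i)]; simp)]
        omega
    omega
end

section
/- Let d ≥ 4 be an integer and ν : ℕ → ℕ a finitely supported function with ν_m = 0 for m ≤ 1. Set χ1 = 3 − 2d + Σ_m (m−1)·ν_m, χ2 = 2d − Σ_m m·ν_m, and define Z(s) = (1/(ds+3))·(χ1 + χ2/(s+1) + Σ_m (2 − m + m/(s+1))·ν_m/(ms+2)) ∈ ℚ(s). Then Z has a pole of order exactly 2 at s = −3/d if and only if d is divisible by 3 and ν_{2d/3} ≠ 0; and in all cases the order of the pole of Z at −3/d is at most 2. (Proposition 1.6, criterion for the double pole at −3/d.) -/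
/-!
Clearing denominators writes `Z = N / D` with `D = (ds+3)(s+1)∏ₘ(ms+2)`. At `α = -3/d` the
factor `ds+3` vanishes simply, `s+1` does not (as `d ≠ 3`), and `ms+2` vanishes only for
`m = 2d/3`, so `D` vanishes to order `1` or `2`; this gives the bound. If `m₀ = 2d/3` occurs,
every term of `N` but the `m₀`-th summand contains the factor `m₀s+2`, and that summand takes
the value `(2α+4)·ν_{m₀}·∏_{m≠m₀}(mα+2) ≠ 0` at `α`, so the pole has order exactly `2`.
-/

open Polynomial

local notation "π" => algebraMap ℚ[X] (RatFunc ℚ)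

theorem orderAt_algebraMap_div_s4 {p q : ℚ[X]} (hp : p ≠ 0) (hq : q ≠ 0) (α : ℚ) :
    orderAt (π p / π q) α = (rootMultiplicity α p : ℤ) - rootMultiplicity α q := by
  set Z := π p / π q
  have hZ : Z.num * q = p * Z.denom := (RatFunc.num_mul_eq_mul_denom_iff hq).2 rfl
  have hnum : Z.num ≠ 0 := RatFunc.num_ne_zero <|
    div_ne_zero (RatFunc.algebraMap_ne_zero hp) (RatFunc.algebraMap_ne_zero hq)
  have := congrArg (rootMultiplicity α) hZ
  rw [rootMultiplicity_mul (mul_ne_zero hnum hq),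
    rootMultiplicity_mul (mul_ne_zero hp (RatFunc.denom_ne_zero Z))] at this
  unfold orderAt
  omega

theorem neg_rootMultiplicity_le_orderAt_algebraMap_div (p : ℚ[X]) {q : ℚ[X]} (hq : q ≠ 0)
    (α : ℚ) : -(rootMultiplicity α q : ℤ) ≤ orderAt (π p / π q) α := by
  rcases eq_or_ne p 0 with rfl | hp
  · simp [orderAt, rootMultiplicity_eq_zero]
  · rw [orderAt_algebraMap_div_s4 hp hq]
    omega

theorem orderAt_algebraMap_div_of_eval_ne_zero {p q : ℚ[X]} {α : ℚ} (hp : p.eval α ≠ 0)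
    (hq : q ≠ 0) : orderAt (π p / π q) α = -(rootMultiplicity α q : ℤ) := by
  rw [orderAt_algebraMap_div_s4 (fun h => hp (by simp [h])) hq, rootMultiplicity_eq_zero hp]
  simp

theorem rootMultiplicity_C_mul_X_add_C_eq_one {K : Type*} [Field K] {a b α : K} (ha : a ≠ 0)
    (hα : a * α + b = 0) : rootMultiplicity α (C a * X + C b) = 1 := by
  have hfac : C a * X + C b = C a * (X - C α) := by
    rw [show b = -(a * α) by linear_combination hα]; simp only [map_neg, map_mul]; ring
  rw [hfac, rootMultiplicity_mul (mul_ne_zero (C_ne_zero.2 ha) (X_sub_C_ne_zero α)),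
    rootMultiplicity_C, rootMultiplicity_X_sub_C_self]

theorem C_mul_X_add_C_ne_zero {R : Type*} [Semiring R] (a : R) {b : R} (hb : b ≠ 0) :
    C a * X + C b ≠ 0 :=
  fun h => hb (by simpa using congrArg (eval 0) h)

noncomputable def poleProduct (ν : ℕ →₀ ℕ) : ℚ[X] :=
  ∏ m ∈ ν.support, (C (m : ℚ) * X + C 2)

noncomputable def zetaNumerator (χ1 χ2 : ℚ) (ν : ℕ →₀ ℕ) : ℚ[X] :=
  C χ1 * ((X + 1) * poleProduct ν) + C χ2 * poleProduct ν +
    ∑ m ∈ ν.support, (C (2 - (m : ℚ)) * (X + 1) + C (m : ℚ)) * C (ν m : ℚ) *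
      ∏ m' ∈ ν.support.erase m, (C (m' : ℚ) * X + C 2)

noncomputable def zetaDenominator (d : ℕ) (ν : ℕ →₀ ℕ) : ℚ[X] :=
  (C (d : ℚ) * X + C 3) * ((X + 1) * poleProduct ν)

theorem poleProduct_ne_zero (ν : ℕ →₀ ℕ) : poleProduct ν ≠ 0 :=
  Finset.prod_ne_zero_iff.2 fun _ _ => C_mul_X_add_C_ne_zero _ two_ne_zero

theorem zetaDenominator_ne_zero (d : ℕ) (ν : ℕ →₀ ℕ) : zetaDenominator d ν ≠ 0 :=
  mul_ne_zero (C_mul_X_add_C_ne_zero _ three_ne_zero)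
    (mul_ne_zero (by simpa using X_add_C_ne_zero (1 : ℚ)) (poleProduct_ne_zero ν))

theorem zeta_eq_algebraMap_div (d : ℕ) (χ1 χ2 : ℚ) (ν : ℕ →₀ ℕ) :
    1 / ((d : RatFunc ℚ) * RatFunc.X + 3) *
      (RatFunc.C χ1 + RatFunc.C χ2 / (RatFunc.X + 1) +
        ∑ m ∈ ν.support,
          ((2 : RatFunc ℚ) - (m : RatFunc ℚ) + (m : RatFunc ℚ) / (RatFunc.X + 1)) *
            (ν m : RatFunc ℚ) / ((m : RatFunc ℚ) * RatFunc.X + 2)) =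
      π (zetaNumerator χ1 χ2 ν) / π (zetaDenominator d ν) := by
  have hX1 : (RatFunc.X + 1 : RatFunc ℚ) ≠ 0 := by
    simpa using RatFunc.algebraMap_ne_zero (X_add_C_ne_zero (1 : ℚ))
  have hm2 : ∀ m : ℕ, ((m : RatFunc ℚ) * RatFunc.X + 2) ≠ 0 := fun m => by
    simpa using RatFunc.algebraMap_ne_zero (C_mul_X_add_C_ne_zero (m : ℚ) two_ne_zero)
  have hd3 : ((d : RatFunc ℚ) * RatFunc.X + 3) ≠ 0 := by
    simpa using RatFunc.algebraMap_ne_zero (C_mul_X_add_C_ne_zero (d : ℚ) three_ne_zero)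
  have hP : π (poleProduct ν) ≠ 0 := RatFunc.algebraMap_ne_zero (poleProduct_ne_zero ν)
  have hsum : ∑ m ∈ ν.support,
      ((2 : RatFunc ℚ) - (m : RatFunc ℚ) + (m : RatFunc ℚ) / (RatFunc.X + 1)) *
        (ν m : RatFunc ℚ) / ((m : RatFunc ℚ) * RatFunc.X + 2) =
      π (∑ m ∈ ν.support, (C (2 - (m : ℚ)) * (X + 1) + C (m : ℚ)) * C (ν m : ℚ) *
        ∏ m' ∈ ν.support.erase m, (C (m' : ℚ) * X + C 2)) /
        ((RatFunc.X + 1) * π (poleProduct ν)) := by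
    rw [eq_div_iff (mul_ne_zero hX1 hP), Finset.sum_mul, map_sum]
    refine Finset.sum_congr rfl fun m hm => ?_
    rw [poleProduct, ← Finset.mul_prod_erase _ _ hm, map_mul, map_mul, map_mul]
    generalize π (∏ m' ∈ ν.support.erase m, (C (m' : ℚ) * X + C 2)) = Q
    simp only [map_add, map_mul, map_sub, map_one, RatFunc.algebraMap_X, map_natCast, map_ofNat]
    field_simp [hm2 m]
  rw [hsum, eq_div_iff (RatFunc.algebraMap_ne_zero (zetaDenominator_ne_zero d ν)),
    zetaNumerator, zetaDenominator]
  simp only [map_add, map_mul, map_one, RatFunc.algebraMap_X, RatFunc.algebraMap_C,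
    map_natCast, map_ofNat]
  field_simp

section Roots

variable {ν : ℕ →₀ ℕ} {α : ℚ} {m₀ : ℕ}

theorem eq_of_natCast_mul_add_two_eq_zero {m m' : ℕ} (h : (m : ℚ) * α + 2 = 0)
    (h' : (m' : ℚ) * α + 2 = 0) : m = m' := by
  have hα : α ≠ 0 := by rintro rfl; norm_num at h
  have : (m : ℚ) = m' := mul_right_cancel₀ hα (by linear_combination h - h')
  exact_mod_cast this

theorem prod_erase_natCast_mul_add_two_ne_zero (s : Finset ℕ) (hα : (m₀ : ℚ) * α + 2 = 0) :
    ∏ m ∈ s.erase m₀, ((m : ℚ) * α + 2) ≠ 0 :=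
  Finset.prod_ne_zero_iff.2 fun _ hm h =>
    (Finset.mem_erase.1 hm).1 (eq_of_natCast_mul_add_two_eq_zero h hα)

theorem rootMultiplicity_poleProduct_of_root (hm₀ : m₀ ∈ ν.support)
    (hα : (m₀ : ℚ) * α + 2 = 0) : rootMultiplicity α (poleProduct ν) = 1 := by
  have hrest : (∏ m ∈ ν.support.erase m₀, (C (m : ℚ) * X + C 2)).eval α ≠ 0 := by
    simpa [eval_prod] using prod_erase_natCast_mul_add_two_ne_zero ν.support hα
  have hm₀0 : (m₀ : ℚ) ≠ 0 := by rintro h; simp [h] at hα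
  rw [poleProduct, ← Finset.mul_prod_erase _ _ hm₀,
    rootMultiplicity_mul (mul_ne_zero (C_mul_X_add_C_ne_zero _ two_ne_zero)
      fun h => hrest (by rw [h, eval_zero])),
    rootMultiplicity_C_mul_X_add_C_eq_one hm₀0 hα, rootMultiplicity_eq_zero hrest]

theorem rootMultiplicity_poleProduct_of_forall_ne (h : ∀ m ∈ ν.support, (m : ℚ) * α + 2 ≠ 0) :
    rootMultiplicity α (poleProduct ν) = 0 :=
  rootMultiplicity_eq_zero (by simpa [poleProduct, eval_prod, Finset.prod_eq_zero_iff] using h)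

theorem eval_zetaNumerator_of_root (χ1 χ2 : ℚ) (hm₀ : m₀ ∈ ν.support)
    (hα : (m₀ : ℚ) * α + 2 = 0) :
    (zetaNumerator χ1 χ2 ν).eval α =
      (2 * α + 4) * ν m₀ * ∏ m ∈ ν.support.erase m₀, ((m : ℚ) * α + 2) := by
  have hP : (poleProduct ν).eval α = 0 := by
    rw [poleProduct, eval_prod]
    exact Finset.prod_eq_zero hm₀ (by simpa using hα)
  rw [zetaNumerator, eval_add, eval_add, eval_mul, eval_mul, eval_mul, hP, eval_finsetSum,
    Finset.sum_eq_single_of_mem m₀ hm₀]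
  · simp only [eval_mul, eval_add, eval_C, eval_X, eval_one, eval_prod]
    linear_combination (-(ν m₀ : ℚ) * ∏ m ∈ ν.support.erase m₀, ((m : ℚ) * α + 2)) * hα
  · intro m _ hm
    have hm₀m : m₀ ∈ ν.support.erase m := Finset.mem_erase.2 ⟨Ne.symm hm, hm₀⟩
    simp only [eval_mul, eval_prod]
    rw [Finset.prod_eq_zero hm₀m (by simpa using hα), mul_zero]

theorem eval_zetaNumerator_ne_zero (χ1 χ2 : ℚ) (hm₀ : m₀ ∈ ν.support)
    (hα : (m₀ : ℚ) * α + 2 = 0) (hα2 : α ≠ -2) : (zetaNumerator χ1 χ2 ν).eval α ≠ 0 := by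
  rw [eval_zetaNumerator_of_root χ1 χ2 hm₀ hα]
  refine mul_ne_zero (mul_ne_zero ?_ (by exact_mod_cast Finsupp.mem_support_iff.1 hm₀))
    (prod_erase_natCast_mul_add_two_ne_zero _ hα)
  contrapose! hα2
  linarith

end Roots

section PoleAtNegThreeDivD

variable {d : ℕ}

theorem natCast_mul_neg_three_div_add_two_eq_zero_iff (hd : d ≠ 0) (m : ℕ) :
    (m : ℚ) * (-3 / d) + 2 = 0 ↔ 3 * m = 2 * d := by
  have hd' : (d : ℚ) ≠ 0 := Nat.cast_ne_zero.2 hd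
  rw [← @Nat.cast_inj ℚ]
  push_cast
  constructor <;> intro h
  · field_simp at h
    linarith
  · field_simp
    linarith

theorem exists_mem_support_root_iff (hd : d ≠ 0) (ν : ℕ →₀ ℕ) :
    (∃ m ∈ ν.support, (m : ℚ) * (-3 / d) + 2 = 0) ↔ 3 ∣ d ∧ ν (2 * d / 3) ≠ 0 := by
  simp_rw [natCast_mul_neg_three_div_add_two_eq_zero_iff hd, Finsupp.mem_support_iff]
  constructor
  · rintro ⟨m, hm, h⟩
    obtain rfl : m = 2 * d / 3 := by omega
    exact ⟨by omega, hm⟩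
  · rintro ⟨h3, h⟩
    exact ⟨_, h, by omega⟩

theorem rootMultiplicity_zetaDenominator (hd0 : d ≠ 0) (hd3 : d ≠ 3) (ν : ℕ →₀ ℕ) :
    rootMultiplicity (-3 / d : ℚ) (zetaDenominator d ν) =
      1 + rootMultiplicity (-3 / d : ℚ) (poleProduct ν) := by
  have hd' : (d : ℚ) ≠ 0 := Nat.cast_ne_zero.2 hd0
  have hX1 : (X + 1 : ℚ[X]).eval (-3 / (d : ℚ)) ≠ 0 := by
    have : (d : ℚ) ≠ 3 := by exact_mod_cast hd3
    rw [eval_add, eval_X, eval_one, div_add_one hd']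
    exact div_ne_zero (fun h => this (by linarith)) hd'
  rw [zetaDenominator, rootMultiplicity_mul (zetaDenominator_ne_zero d ν),
    rootMultiplicity_mul (right_ne_zero_of_mul (zetaDenominator_ne_zero d ν)),
    rootMultiplicity_C_mul_X_add_C_eq_one hd' (by field_simp; ring), rootMultiplicity_eq_zero hX1,
    zero_add]

end PoleAtNegThreeDivD

theorem statement4_general (d : ℕ) (hd : 4 ≤ d) (ν : ℕ →₀ ℕ)
    (χ1 χ2 : ℚ)
    (Z : RatFunc ℚ)
    (hZ : Z = 1 / ((d : RatFunc ℚ) * RatFunc.X + 3) *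
      (RatFunc.C χ1 + RatFunc.C χ2 / (RatFunc.X + 1) +
        ∑ m ∈ ν.support,
          ((2 : RatFunc ℚ) - (m : RatFunc ℚ) + (m : RatFunc ℚ) / (RatFunc.X + 1)) *
            (ν m : RatFunc ℚ) / ((m : RatFunc ℚ) * RatFunc.X + 2))) :
    (orderAt Z (-3 / (d : ℚ)) = -2 ↔ 3 ∣ d ∧ ν (2 * d / 3) ≠ 0) ∧
      -2 ≤ orderAt Z (-3 / (d : ℚ)) := by
  rw [hZ, zeta_eq_algebraMap_div]
  have hd0 : d ≠ 0 := by omega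
  have hden := rootMultiplicity_zetaDenominator hd0 (by omega) ν
  by_cases hc : 3 ∣ d ∧ ν (2 * d / 3) ≠ 0
  · obtain ⟨m₀, hm₀, hroot⟩ := (exists_mem_support_root_iff hd0 ν).2 hc
    have hα2 : -3 / (d : ℚ) ≠ -2 := by
      have : (4 : ℚ) ≤ d := by exact_mod_cast hd
      rw [Ne, div_eq_iff (by positivity)]
      intro h
      linarith
    rw [orderAt_algebraMap_div_of_eval_ne_zero (eval_zetaNumerator_ne_zero χ1 χ2 hm₀ hroot hα2)
      (zetaDenominator_ne_zero d ν), hden, rootMultiplicity_poleProduct_of_root hm₀ hroot]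
    simp [hc]
  · have hP := rootMultiplicity_poleProduct_of_forall_ne fun m hm h =>
      hc ((exists_mem_support_root_iff hd0 ν).1 ⟨m, hm, h⟩)
    have hle := neg_rootMultiplicity_le_orderAt_algebraMap_div (zetaNumerator χ1 χ2 ν)
      (zetaDenominator_ne_zero d ν) (-3 / d)
    rw [hden, hP] at hle
    exact ⟨iff_of_false (by omega) hc, by omega⟩

/-- Proposition 1.6 (criterion for the double pole at `-3/d`): with
`χ₁ = 3 - 2d + Σₘ (m-1)νₘ`, `χ₂ = 2d - Σₘ m νₘ`, the zeta function
`Z(s) = (1/(ds+3)) · (χ₁ + χ₂/(s+1) + Σₘ (2 - m + m/(s+1)) νₘ/(ms+2))` has a pole of order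
exactly `2` at `s = -3/d` iff `3 ∣ d` and `ν_{2d/3} ≠ 0`; and the pole order is at most `2`. -/
theorem statement4 (d : ℕ) (hd : 4 ≤ d) (ν : ℕ →₀ ℕ) (hν1 : ∀ m ≤ 1, ν m = 0)
    (χ1 χ2 : ℚ)
    (hχ1 : χ1 = 3 - 2 * (d : ℚ) + ∑ m ∈ ν.support, ((m : ℚ) - 1) * (ν m : ℚ))
    (hχ2 : χ2 = 2 * (d : ℚ) - ∑ m ∈ ν.support, (m : ℚ) * (ν m : ℚ))
    (Z : RatFunc ℚ)
    (hZ : Z = 1 / ((d : RatFunc ℚ) * RatFunc.X + 3) *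
      (RatFunc.C χ1 + RatFunc.C χ2 / (RatFunc.X + 1) +
        ∑ m ∈ ν.support,
          ((2 : RatFunc ℚ) - (m : RatFunc ℚ) + (m : RatFunc ℚ) / (RatFunc.X + 1)) *
            (ν m : RatFunc ℚ) / ((m : RatFunc ℚ) * RatFunc.X + 2))) :
    (orderAt Z (-3 / (d : ℚ)) = -2 ↔ 3 ∣ d ∧ ν (2 * d / 3) ≠ 0) ∧
      -2 ≤ orderAt Z (-3 / (d : ℚ)) :=
  statement4_general d hd ν χ1 χ2 Z hZ
end

section
/- Let L be a finite set of d distinct 2-dimensional linear subspaces of ℂ³ (lines in ℙ²(ℂ)) with d ≥ 2, and assume every 1-dimensional linear subspace of ℂ³ is contained in at most d − 2 members of L. For m ≥ 2 let ν_m be the (finite) number of 1-dimensional subspaces contained in exactly m members of L, and set χ1 = 3 − 2d + Σ_m (m−1)·ν_m, χ2 = 2d − Σ_m m·ν_m, Z(s) = (1/(ds+3))·(χ1 + χ2/(s+1) + Σ_m (2 − m + m/(s+1))·ν_m/(ms+2)) ∈ ℚ(s). Then Z has a pole at s = −3/d. (Proposition 1.8: for an indecomposable essential reduced central hyperplane arrangement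 in ℂ³ of degree d, −3/d is a pole of the topological local zeta function at the origin.) -/
/-!
Write `Z = N / D` with `D = (ds+3)(s+1)∏ₘ(ms+2)`, the product running over the multiplicities
that occur. As `D(-3/d) = 0`, it suffices that `N(-3/d) ≠ 0`. If some occurring `m` has `3m = 2d`,
only the `m`-th summand of `N` survives at `-3/d`, and it is nonzero. Otherwise `N(-3/d)` is a
nonzero multiple of `∑ₘ νₘ m(m-1) w(m)` with `w(m) = 27(d-m)/(d²(2d-3m))`; this uses the count
`∑ₘ νₘ m(m-1) = d(d-1)` of ordered pairs of distinct lines by their intersection point.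
If every `3m < 2d`, all terms are positive. Otherwise there is a point of multiplicity `k > 2d/3`.
Two points share at most one line, so this point is unique and every other multiplicity is at
most `d+1-k`; as `w` is increasing, the remaining terms are bounded by `w(d+1-k)`, and the sum is
negative.
-/

open Polynomial Module

open Finset

theorem cast_card_offDiag {α : Type*} [DecidableEq α] (s : Finset α) :
    (#s.offDiag : ℚ) = #s * (#s - 1) := by
  rw [offDiag_card, Nat.cast_sub (Nat.le_mul_self _)]
  push_cast
  ring

namespace LineArrangement

variable {K V : Type*} [Field K] [AddCommGroup V] [Module K V]

variable (L : Finset (Submodule K V))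

noncomputable def mult (p : Submodule K V) : ℕ := {ℓ | ℓ ∈ L ∧ p ≤ ℓ}.ncard

noncomputable def numPoints (m : ℕ) : ℕ :=
  {p : Submodule K V | finrank K p = 1 ∧ mult L p = m}.ncard

def multiplePoints [DecidableEq (Submodule K V)] : Finset (Submodule K V) :=
  L.offDiag.image fun ℓ => ℓ.1 ⊓ ℓ.2

variable {L}

theorem mult_eq_card_filter (p : Submodule K V) [DecidablePred (p ≤ ·)] :
    mult L p = #{ℓ ∈ L | p ≤ ℓ} := by
  rw [mult, ← Set.ncard_coe_finset, coe_filter]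

theorem mult_le_card (p : Submodule K V) : mult L p ≤ #L := by
  classical
  exact mult_eq_card_filter p ▸ card_filter_le _ _

theorem exists_of_numPoints_ne_zero {m : ℕ} (h : numPoints L m ≠ 0) :
    ∃ p : Submodule K V, finrank K p = 1 ∧ mult L p = m :=
  Set.nonempty_of_ncard_ne_zero h

variable [FiniteDimensional K V]

section Incidence

variable {ℓ ℓ₁ ℓ₂ p q : Submodule K V}

theorem finrank_inf_eq_one (hV : finrank K V = 3) (h₁ : finrank K ℓ₁ = 2)
    (h₂ : finrank K ℓ₂ = 2) (hne : ℓ₁ ≠ ℓ₂) : finrank K ↥(ℓ₁ ⊓ ℓ₂) = 1 := by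
  have hlt : ℓ₁ < ℓ₁ ⊔ ℓ₂ := lt_of_le_of_ne le_sup_left fun h =>
    hne (Submodule.eq_of_le_of_finrank_eq (h ▸ le_sup_right) (by omega)).symm
  have := Submodule.finrank_lt_finrank_of_lt hlt
  have := Submodule.finrank_sup_add_finrank_inf_eq ℓ₁ ℓ₂
  have := hV ▸ Submodule.finrank_le (ℓ₁ ⊔ ℓ₂)
  omega

theorem inf_eq_iff_le_and_le (hV : finrank K V = 3) (h₁ : finrank K ℓ₁ = 2)
    (h₂ : finrank K ℓ₂ = 2) (hne : ℓ₁ ≠ ℓ₂) (hp : finrank K p = 1) :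
    ℓ₁ ⊓ ℓ₂ = p ↔ p ≤ ℓ₁ ∧ p ≤ ℓ₂ := by
  refine ⟨fun h => h ▸ ⟨inf_le_left, inf_le_right⟩, fun h => ?_⟩
  have := finrank_inf_eq_one hV h₁ h₂ hne
  exact (Submodule.eq_of_le_of_finrank_eq (le_inf h.1 h.2) (by omega)).symm

theorem sup_eq_of_le_of_le (hp : finrank K p = 1) (hq : finrank K q = 1) (hne : p ≠ q)
    (hℓ : finrank K ℓ = 2) (hpℓ : p ≤ ℓ) (hqℓ : q ≤ ℓ) : p ⊔ q = ℓ := by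
  have hlt : p < p ⊔ q := lt_of_le_of_ne le_sup_left fun h =>
    hne (Submodule.eq_of_le_of_finrank_eq (h ▸ le_sup_right) (by omega)).symm
  have := Submodule.finrank_lt_finrank_of_lt hlt
  have := Submodule.finrank_sup_add_finrank_inf_eq p q
  have := Submodule.finrank_mono (inf_le_left : p ⊓ q ≤ p)
  exact Submodule.eq_of_le_of_finrank_le (sup_le hpℓ hqℓ) (by omega)

end Incidence

variable (hL : ∀ ℓ ∈ L, finrank K ℓ = 2)
include hL

theorem mult_add_mult_le {p q : Submodule K V} (hp : finrank K p = 1) (hq : finrank K q = 1)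
    (hne : p ≠ q) : mult L p + mult L q ≤ #L + 1 := by
  classical
  have hinter : {ℓ ∈ L | p ≤ ℓ} ∩ {ℓ ∈ L | q ≤ ℓ} ⊆ {p ⊔ q} := fun ℓ hℓ => by
    simp only [mem_inter, mem_filter] at hℓ
    exact mem_singleton.mpr (sup_eq_of_le_of_le hp hq hne (hL ℓ hℓ.1.1) hℓ.1.2 hℓ.2.2).symm
  have := card_union_add_card_inter {ℓ ∈ L | p ≤ ℓ} {ℓ ∈ L | q ≤ ℓ}
  have := (card_le_card hinter).trans_eq (card_singleton _)
  have := card_le_card (union_subset (filter_subset (p ≤ ·) L) (filter_subset (q ≤ ·) L))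
  rw [mult_eq_card_filter, mult_eq_card_filter]
  omega

theorem add_le_of_numPoints_ne_zero {m k : ℕ} (hm : numPoints L m ≠ 0) (hk : numPoints L k ≠ 0)
    (hmk : m ≠ k) : m + k ≤ #L + 1 := by
  obtain ⟨p, hp, rfl⟩ := exists_of_numPoints_ne_zero hm
  obtain ⟨q, hq, rfl⟩ := exists_of_numPoints_ne_zero hk
  exact mult_add_mult_le hL hp hq fun h => hmk (h ▸ rfl)

theorem numPoints_le_one {k : ℕ} (hk : #L + 1 < 2 * k) : numPoints L k ≤ 1 := by
  by_contra h
  have h0 : numPoints L k ≠ 0 := by omega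
  refine h ((Set.ncard_le_one (Set.finite_of_ncard_ne_zero h0)).mpr
    fun p hp q hq => by_contra fun hpq => ?_)
  have := mult_add_mult_le hL hp.1 hq.1 hpq
  rw [hp.2, hq.2] at this
  omega

variable [DecidableEq (Submodule K V)] (hV : finrank K V = 3)
include hV

theorem finrank_of_mem_multiplePoints {p : Submodule K V} (hp : p ∈ multiplePoints L) :
    finrank K p = 1 := by
  obtain ⟨ℓ, hℓ, rfl⟩ := mem_image.mp hp
  obtain ⟨h₁, h₂, hne⟩ := mem_offDiag.mp hℓ
  exact finrank_inf_eq_one hV (hL _ h₁) (hL _ h₂) hne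

theorem mem_multiplePoints_iff {p : Submodule K V} (hp : finrank K p = 1) :
    p ∈ multiplePoints L ↔ 2 ≤ mult L p := by
  classical
  rw [mult_eq_card_filter, Nat.succ_le_iff, one_lt_card, multiplePoints, mem_image]
  simp only [mem_filter, mem_offDiag, Prod.exists]
  constructor
  · rintro ⟨ℓ₁, ℓ₂, ⟨h₁, h₂, hne⟩, hp⟩
    exact ⟨ℓ₁, ⟨h₁, hp ▸ inf_le_left⟩, ℓ₂, ⟨h₂, hp ▸ inf_le_right⟩, hne⟩
  · rintro ⟨ℓ₁, ⟨h₁, hp₁⟩, ℓ₂, ⟨h₂, hp₂⟩, hne⟩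
    exact ⟨ℓ₁, ℓ₂, ⟨h₁, h₂, hne⟩,
      (inf_eq_iff_le_and_le hV (hL _ h₁) (hL _ h₂) hne hp).mpr ⟨hp₁, hp₂⟩⟩

-- Each ordered pair of distinct lines is counted at its intersection point.
theorem sum_mult_mul_pred :
    ∑ p ∈ multiplePoints L, (mult L p : ℚ) * (mult L p - 1) = #L * (#L - 1) := by
  classical
  have hfiber : ∀ p ∈ multiplePoints L,
      {ℓ ∈ L.offDiag | ℓ.1 ⊓ ℓ.2 = p} = {ℓ ∈ L | p ≤ ℓ}.offDiag := fun p hp => by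
    have hp1 := finrank_of_mem_multiplePoints hL hV hp
    ext ⟨ℓ₁, ℓ₂⟩
    simp only [mem_filter, mem_offDiag]
    constructor
    · rintro ⟨⟨h₁, h₂, hne⟩, h⟩
      have := (inf_eq_iff_le_and_le hV (hL _ h₁) (hL _ h₂) hne hp1).mp h
      exact ⟨⟨h₁, this.1⟩, ⟨h₂, this.2⟩, hne⟩
    · rintro ⟨⟨h₁, hp₁⟩, ⟨h₂, hp₂⟩, hne⟩
      exact ⟨⟨h₁, h₂, hne⟩,
        (inf_eq_iff_le_and_le hV (hL _ h₁) (hL _ h₂) hne hp1).mpr ⟨hp₁, hp₂⟩⟩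
  rw [← cast_card_offDiag L, card_eq_sum_card_fiberwise (f := fun ℓ => ℓ.1 ⊓ ℓ.2)
    fun ℓ hℓ => mem_image_of_mem _ hℓ, Nat.cast_sum]
  refine sum_congr rfl fun p hp => ?_
  rw [hfiber p hp, cast_card_offDiag, mult_eq_card_filter]

theorem numPoints_eq_card {m : ℕ} (hm : 2 ≤ m) :
    numPoints L m = #{p ∈ multiplePoints L | mult L p = m} := by
  rw [numPoints, ← Set.ncard_coe_finset, coe_filter]
  congr 1
  ext p
  simp only [Set.mem_ofPred_eq]
  constructor
  · rintro ⟨hp, rfl⟩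
    exact ⟨(mem_multiplePoints_iff hL hV hp).mpr hm, rfl⟩
  · rintro ⟨hp, rfl⟩
    exact ⟨finrank_of_mem_multiplePoints hL hV hp, rfl⟩

theorem sum_numPoints_mul_mul_pred :
    ∑ m ∈ Icc 2 #L, (numPoints L m : ℚ) * m * (m - 1) = #L * (#L - 1) := by
  have hmaps : ∀ p ∈ multiplePoints L, mult L p ∈ Icc 2 #L := fun p hp =>
    mem_Icc.mpr ⟨(mem_multiplePoints_iff hL hV (finrank_of_mem_multiplePoints hL hV hp)).mp hp,
      mult_le_card p⟩
  rw [← sum_mult_mul_pred hL hV, ← sum_fiberwise_of_maps_to hmaps]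
  refine sum_congr rfl fun m hm => ?_
  rw [numPoints_eq_card hL hV (mem_Icc.mp hm).1, card_eq_sum_ones, Nat.cast_sum, sum_mul,
    sum_mul]
  exact sum_congr rfl fun p hp => by rw [(mem_filter.mp hp).2, Nat.cast_one, one_mul]

end LineArrangement

theorem orderAt_neg_of_mul_eq {Z : RatFunc ℚ} {g W : ℚ[X]} {α : ℚ}
    (hZ : Z * algebraMap ℚ[X] (RatFunc ℚ) g = algebraMap ℚ[X] (RatFunc ℚ) W)
    (hg : g.eval α = 0) (hW : W.eval α ≠ 0) : orderAt Z α < 0 := by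
  have hg0 : g ≠ 0 := by
    rintro rfl
    rw [map_zero, mul_zero, eq_comm, map_eq_zero_iff _ (RatFunc.algebraMap_injective ℚ)] at hZ
    exact hW (by rw [hZ, eval_zero])
  have hcross : Z.num * g = W * Z.denom :=
    (RatFunc.num_mul_eq_mul_denom_iff hg0).mpr
      ((eq_div_iff (RatFunc.algebraMap_ne_zero hg0)).mpr hZ)
  have hden : Z.denom.eval α = 0 := by
    simpa [hg, hW] using congrArg (eval α) hcross
  have hnum : Z.num.eval α ≠ 0 := fun hnum => by
    obtain ⟨u, v, huv⟩ := Z.isCoprime_num_denom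
    simpa [hnum, hden] using congrArg (eval α) huv
  have h₁ : rootMultiplicity α Z.num = 0 := rootMultiplicity_eq_zero hnum
  have h₂ : 0 < rootMultiplicity α Z.denom :=
    (rootMultiplicity_pos Z.denom_ne_zero).mpr hden
  unfold orderAt
  omega

section Zeta

variable (d : ℕ) (S : Finset ℕ) (ν : ℕ → ℕ)

def chi1 : ℚ := 3 - 2 * (d : ℚ) + ∑ m ∈ S, ((m : ℚ) - 1) * (ν m : ℚ)

def chi2 : ℚ := 2 * (d : ℚ) - ∑ m ∈ S, (m : ℚ) * (ν m : ℚ)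

-- With `S = Icc 2 d` and `ν m` the number of points of multiplicity `m`, this is the `Z` of the
-- statement.
noncomputable def topZeta : RatFunc ℚ :=
  1 / ((d : RatFunc ℚ) * RatFunc.X + 3) *
    (RatFunc.C (chi1 d S ν) + RatFunc.C (chi2 d S ν) / (RatFunc.X + 1) +
      ∑ m ∈ S, ((2 : RatFunc ℚ) - (m : RatFunc ℚ) + (m : RatFunc ℚ) / (RatFunc.X + 1)) *
        (ν m : RatFunc ℚ) / ((m : RatFunc ℚ) * RatFunc.X + 2))

noncomputable def zetaDenom : ℚ[X] :=
  ((d : ℚ[X]) * X + 3) * (X + 1) * ∏ m ∈ S, ((m : ℚ[X]) * X + 2)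

noncomputable def zetaNumer : ℚ[X] :=
  C (chi1 d S ν) * (X + 1) * ∏ m ∈ S, ((m : ℚ[X]) * X + 2) +
    C (chi2 d S ν) * ∏ m ∈ S, ((m : ℚ[X]) * X + 2) +
    ∑ m ∈ S, (ν m : ℚ[X]) * ((2 - (m : ℚ[X])) * (X + 1) + (m : ℚ[X])) *
      ∏ n ∈ S.erase m, ((n : ℚ[X]) * X + 2)

theorem topZeta_filter_ne_zero : topZeta d {m ∈ S | ν m ≠ 0} ν = topZeta d S ν := by
  have hsum {R : Type} [AddCommMonoid R] (f : ℕ → R) (hf : ∀ m, ν m = 0 → f m = 0) :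
      ∑ m ∈ S with ν m ≠ 0, f m = ∑ m ∈ S, f m :=
    sum_filter_of_ne fun m _ hm h => hm (hf m h)
  simp only [topZeta, chi1, chi2]
  rw [hsum _ (fun m h => by simp [h]), hsum _ (fun m h => by simp [h]),
    hsum _ (fun m h => by simp [h])]

theorem topZeta_mul_zetaDenom :
    topZeta d S ν * algebraMap ℚ[X] (RatFunc ℚ) (zetaDenom d S) =
      algebraMap ℚ[X] (RatFunc ℚ) (zetaNumer d S ν) := by
  have hne (a b : ℚ) (hb : b ≠ 0) : algebraMap ℚ[X] (RatFunc ℚ) (C a * X + C b) ≠ 0 :=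
    RatFunc.algebraMap_ne_zero fun h => hb (by simpa using congrArg (eval 0) h)
  have hd : (d : RatFunc ℚ) * RatFunc.X + 3 ≠ 0 := by simpa using hne d 3
  have h1 : (RatFunc.X + 1 : RatFunc ℚ) ≠ 0 := by simpa using hne 1 1
  have hm (m : ℕ) : (m : RatFunc ℚ) * RatFunc.X + 2 ≠ 0 := by simpa using hne m 2
  simp only [topZeta, zetaDenom, zetaNumer, map_mul, map_add, map_sub, map_sum, map_prod,
    map_natCast, map_ofNat, map_one, RatFunc.algebraMap_C, RatFunc.algebraMap_X]
  set P := ∏ m ∈ S, ((m : RatFunc ℚ) * RatFunc.X + 2)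
  have hcancel (B : RatFunc ℚ) : 1 / ((d : RatFunc ℚ) * RatFunc.X + 3) * B *
      (((d : RatFunc ℚ) * RatFunc.X + 3) * (RatFunc.X + 1) * P) = B * ((RatFunc.X + 1) * P) := by
    field_simp
  rw [hcancel, add_mul, add_mul, sum_mul]
  congr 1
  · field_simp
  · refine sum_congr rfl fun m hmS => ?_
    rw [show P = _ from (mul_prod_erase S _ hmS).symm]
    field_simp [hm m]

theorem eval_zetaDenom (hd : d ≠ 0) : (zetaDenom d S).eval (-3 / (d : ℚ)) = 0 := by
  have h : (d : ℚ) * (-3 / d) + 3 = 0 := by field_simp; ring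
  simp [zetaDenom, h]

theorem eval_zetaNumer (s : ℚ) : (zetaNumer d S ν).eval s =
    chi1 d S ν * (s + 1) * ∏ m ∈ S, ((m : ℚ) * s + 2) +
      chi2 d S ν * ∏ m ∈ S, ((m : ℚ) * s + 2) +
      ∑ m ∈ S, (ν m : ℚ) * ((2 - m) * (s + 1) + m) * ∏ n ∈ S.erase m, ((n : ℚ) * s + 2) := by
  simp [zetaNumer, eval_prod, eval_finsetSum]

variable {d S ν}

theorem eval_zetaNumer_of_root {s : ℚ} {k : ℕ} (hk : k ∈ S) (hks : (k : ℚ) * s + 2 = 0) :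
    (zetaNumer d S ν).eval s =
      (ν k : ℚ) * ((2 - k) * (s + 1) + k) * ∏ n ∈ S.erase k, ((n : ℚ) * s + 2) := by
  rw [eval_zetaNumer, prod_eq_zero hk hks, mul_zero, mul_zero, add_zero, zero_add]
  refine sum_eq_single_of_mem k hk fun m _ hmk => ?_
  rw [prod_eq_zero (mem_erase.mpr ⟨hmk.symm, hk⟩) hks, mul_zero]

theorem eval_zetaNumer_of_forall_ne_zero {s : ℚ} (hS : ∀ m ∈ S, (m : ℚ) * s + 2 ≠ 0) :
    (zetaNumer d S ν).eval s = (∏ m ∈ S, ((m : ℚ) * s + 2)) *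
      (chi1 d S ν * (s + 1) + chi2 d S ν +
        ∑ m ∈ S, (ν m : ℚ) * ((2 - m) * (s + 1) + m) / ((m : ℚ) * s + 2)) := by
  rw [eval_zetaNumer, mul_add, mul_add, mul_sum]
  congr 1
  · ring
  · refine sum_congr rfl fun m hm => ?_
    rw [← mul_prod_erase S _ hm]
    field_simp [hS m hm]

end Zeta

-- `∑ₘ νₘ m (m-1) poleWeight d m` is `d - 3` times the residue of `Z` at `-3/d`.
def poleWeight (d m : ℚ) : ℚ := 27 * (d - m) / (d ^ 2 * (2 * d - 3 * m))

theorem chi_add_sum_eq_sum_poleWeight {d : ℕ} {S : Finset ℕ} {ν : ℕ → ℕ} (hd : d ≠ 0)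
    (hS : ∀ m ∈ S, 3 * m ≠ 2 * d)
    (hpairs : ∑ m ∈ S, (ν m : ℚ) * m * (m - 1) = d * (d - 1)) :
    chi1 d S ν * (-3 / d + 1) + chi2 d S ν +
        ∑ m ∈ S, (ν m : ℚ) * ((2 - m) * (-3 / d + 1) + m) / ((m : ℚ) * (-3 / d) + 2) =
      ∑ m ∈ S, (ν m : ℚ) * m * (m - 1) * poleWeight d m := by
  have hterm : ∀ m ∈ S, ((m : ℚ) - 1) * ν m * (-3 / d + 1) - m * ν m +
      (ν m : ℚ) * ((2 - m) * (-3 / d + 1) + m) / ((m : ℚ) * (-3 / d) + 2) =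
      (ν m : ℚ) * m * (m - 1) * poleWeight d m - 9 / d ^ 2 * ((ν m : ℚ) * m * (m - 1)) := by
    intro m hm
    have h₁ : (d * 2 - m * 3 : ℚ) ≠ 0 := by
      rw [sub_ne_zero, mul_comm, mul_comm (m : ℚ)]; exact_mod_cast (hS m hm).symm
    have he : (m : ℚ) * (-3 / d) + 2 = (2 * d - 3 * m) / d := by field_simp; ring
    rw [he]
    unfold poleWeight
    field_simp
    ring
  have hconst : (3 - 2 * (d : ℚ)) * (-3 / d + 1) + 2 * d = 9 / d ^ 2 * (d * (d - 1)) := by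
    field_simp; ring
  have hsum := sum_congr rfl hterm
  rw [sum_sub_distrib, ← mul_sum, hpairs, sum_add_distrib, sum_sub_distrib, ← sum_mul] at hsum
  unfold chi1 chi2
  linear_combination hsum + hconst

theorem poleWeight_pos {d m : ℚ} (hm : 0 ≤ m) (h : 3 * m < 2 * d) : 0 < poleWeight d m := by
  have hd : 0 < d := by linarith
  exact div_pos (by linarith) (mul_pos (by positivity) (by linarith))

theorem poleWeight_le_poleWeight {d m n : ℚ} (hd : 0 < d) (hmn : m ≤ n) (hn : 3 * n < 2 * d) :
    poleWeight d m ≤ poleWeight d n := by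
  unfold poleWeight
  rw [div_le_div_iff₀ (mul_pos (by positivity) (by linarith))
    (mul_pos (by positivity) (by linarith))]
  nlinarith [mul_le_mul_of_nonneg_left hmn (by positivity : 0 ≤ 27 * d ^ 3)]

theorem poleWeight_heavy_point_neg {d k : ℚ} (hk : 2 ≤ k) (hkd : k + 2 ≤ d)
    (h : 2 * d < 3 * k) :
    k * (k - 1) * poleWeight d k + (d * (d - 1) - k * (k - 1)) * poleWeight d (d + 1 - k) < 0 := by
  have hu : 0 < 3 * k - 2 * d := by linarith
  have hv : 0 < 3 * k - d - 3 := by linarith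
  have hk' : poleWeight d k = -(27 * (d - k)) / (d ^ 2 * (3 * k - 2 * d)) := by
    unfold poleWeight; rw [neg_div, ← div_neg, ← mul_neg, neg_sub]
  have hdk : poleWeight d (d + 1 - k) = 27 * (k - 1) / (d ^ 2 * (3 * k - d - 3)) := by
    unfold poleWeight; ring_nf
  -- `(d + k - 1)(3k - 2d) - k(3k - d - 3) = -2d(d - k - 1)`
  have hfrac : (d + k - 1) / (3 * k - d - 3) < k / (3 * k - 2 * d) := by
    rw [div_lt_div_iff₀ hv hu]; nlinarith
  have hsplit : k * (k - 1) * poleWeight d k +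
      (d * (d - 1) - k * (k - 1)) * poleWeight d (d + 1 - k) =
      27 * (k - 1) * (d - k) / d ^ 2 * ((d + k - 1) / (3 * k - d - 3) - k / (3 * k - 2 * d)) := by
    have hd : d ≠ 0 := by linarith
    rw [hk', hdk]
    field_simp [hu.ne', hv.ne']
    ring
  rw [hsplit]
  have : 0 < d - k := by linarith
  have : 0 < k - 1 := by linarith
  have : 0 < d := by linarith
  exact mul_neg_of_pos_of_neg (by positivity) (sub_neg.mpr hfrac)

section Sums

variable {d : ℕ} {S : Finset ℕ} {ν : ℕ → ℕ}

theorem sum_poleWeight_pos (hS : ∀ m ∈ S, 2 ≤ m ∧ ν m ≠ 0 ∧ 3 * m < 2 * d) (hne : S.Nonempty) :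
    0 < ∑ m ∈ S, (ν m : ℚ) * m * (m - 1) * poleWeight d m := by
  refine sum_pos (fun m hm => ?_) hne
  obtain ⟨hm2, hνm, hmd⟩ := hS m hm
  have hm2' : (2 : ℚ) ≤ m := by exact_mod_cast hm2
  have hνm' : (0 : ℚ) < ν m := by exact_mod_cast Nat.pos_of_ne_zero hνm
  have hw := poleWeight_pos (by linarith) (by exact_mod_cast hmd : (3 * m : ℚ) < 2 * d)
  have : (0 : ℚ) < m - 1 := by linarith
  positivity

theorem sum_poleWeight_neg {k : ℕ} (hk : k ∈ S) (hk2 : 2 ≤ k) (hkd : k + 2 ≤ d)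
    (hheavy : 2 * d < 3 * k) (hνk : ν k = 1)
    (hS : ∀ m ∈ S, m ≠ k → 2 ≤ m ∧ m + k ≤ d + 1)
    (hpairs : ∑ m ∈ S, (ν m : ℚ) * m * (m - 1) = d * (d - 1)) :
    ∑ m ∈ S, (ν m : ℚ) * m * (m - 1) * poleWeight d m < 0 := by
  have hk2' : (2 : ℚ) ≤ k := by exact_mod_cast hk2
  have hkd' : (k : ℚ) + 2 ≤ d := by exact_mod_cast hkd
  have hheavy' : 2 * (d : ℚ) < 3 * k := by exact_mod_cast hheavy
  have hbound : ∑ m ∈ S.erase k, (ν m : ℚ) * m * (m - 1) * poleWeight d m ≤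
      ∑ m ∈ S.erase k, (ν m : ℚ) * m * (m - 1) * poleWeight d (d + 1 - k) := by
    refine sum_le_sum fun m hm => ?_
    obtain ⟨hm2, hmk⟩ := hS m (mem_of_mem_erase hm) (ne_of_mem_erase hm)
    have hm2' : (2 : ℚ) ≤ m := by exact_mod_cast hm2
    have hmk' : (m : ℚ) + k ≤ d + 1 := by exact_mod_cast hmk
    have : (0 : ℚ) ≤ m - 1 := by linarith
    exact mul_le_mul_of_nonneg_left
      (poleWeight_le_poleWeight (by linarith) (by linarith) (by linarith)) (by positivity)
  have hrest : ∑ m ∈ S.erase k, (ν m : ℚ) * m * (m - 1) = d * (d - 1) - k * (k - 1) := by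
    rw [← hpairs, ← add_sum_erase S _ hk, hνk]
    ring
  rw [← sum_mul, hrest] at hbound
  have := poleWeight_heavy_point_neg hk2' hkd' hheavy'
  rw [← add_sum_erase S _ hk, hνk, Nat.cast_one, one_mul]
  linarith

theorem sum_poleWeight_ne_zero (hd : 2 ≤ d) (hS : ∀ m ∈ S, 2 ≤ m ∧ m + 2 ≤ d ∧ ν m ≠ 0)
    (hroot : ∀ m ∈ S, 3 * m ≠ 2 * d)
    (hpairs : ∑ m ∈ S, (ν m : ℚ) * m * (m - 1) = d * (d - 1))
    (hjoin : ∀ m ∈ S, ∀ k ∈ S, m ≠ k → m + k ≤ d + 1)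
    (hunique : ∀ k ∈ S, d + 1 < 2 * k → ν k = 1) :
    ∑ m ∈ S, (ν m : ℚ) * m * (m - 1) * poleWeight d m ≠ 0 := by
  by_cases hheavy : ∃ k ∈ S, 2 * d < 3 * k
  · obtain ⟨k, hk, hk3⟩ := hheavy
    obtain ⟨hk2, hkd, -⟩ := hS k hk
    exact (sum_poleWeight_neg hk hk2 hkd hk3 (hunique k hk (by omega))
      (fun m hm hmk => ⟨(hS m hm).1, hjoin m hm k hk hmk⟩) hpairs).ne
  · push Not at hheavy
    have hne : S.Nonempty := nonempty_iff_ne_empty.mpr fun h => by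
      rw [h, sum_empty] at hpairs
      have hd' : (2 : ℚ) ≤ d := by exact_mod_cast hd
      nlinarith
    refine (sum_poleWeight_pos (fun m hm => ⟨(hS m hm).1, (hS m hm).2.2, ?_⟩) hne).ne'
    exact lt_of_le_of_ne (hheavy m hm) (hroot m hm)

end Sums

theorem mul_neg_three_div_add_two_eq_zero_iff {d m : ℕ} (hd : d ≠ 0) :
    (m : ℚ) * (-3 / d) + 2 = 0 ↔ 3 * m = 2 * d := by
  rw [show (m : ℚ) * (-3 / d) + 2 = (2 * d - 3 * m) / d by field_simp; ring,
    div_eq_zero_iff, sub_eq_zero]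
  simp only [Nat.cast_eq_zero, hd, or_false]
  norm_cast
  exact eq_comm

theorem eval_zetaNumer_ne_zero_of_root {d k : ℕ} {T : Finset ℕ} {ν : ℕ → ℕ} (hd : 2 ≤ d)
    (hk : k ∈ T) (hk2 : 2 ≤ k) (hνk : ν k ≠ 0) (hkd : 3 * k = 2 * d) :
    (zetaNumer d T ν).eval (-3 / (d : ℚ)) ≠ 0 := by
  have hd0 : d ≠ 0 := by omega
  have hk2' : (2 : ℚ) ≤ k := by exact_mod_cast hk2
  have hd' : (2 : ℚ) ≤ d := by exact_mod_cast hd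
  rw [eval_zetaNumer_of_root hk ((mul_neg_three_div_add_two_eq_zero_iff hd0).mpr hkd)]
  refine mul_ne_zero (mul_ne_zero (by exact_mod_cast hνk) ?_) (prod_ne_zero_iff.mpr ?_)
  · rw [show ((2 : ℚ) - k) * (-3 / d + 1) + k = (2 * d + 3 * k - 6) / d by field_simp; ring]
    exact div_ne_zero (by linarith) (by positivity)
  · intro m hm
    rw [Ne, mul_neg_three_div_add_two_eq_zero_iff hd0]
    have := ne_of_mem_erase hm
    omega

theorem orderAt_topZeta_neg_of_support {d : ℕ} {T : Finset ℕ} {ν : ℕ → ℕ} (hd : 2 ≤ d)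
    (hT : ∀ m ∈ T, 2 ≤ m ∧ m + 2 ≤ d ∧ ν m ≠ 0)
    (hpairs : ∑ m ∈ T, (ν m : ℚ) * m * (m - 1) = d * (d - 1))
    (hjoin : ∀ m ∈ T, ∀ k ∈ T, m ≠ k → m + k ≤ d + 1)
    (hunique : ∀ k ∈ T, d + 1 < 2 * k → ν k = 1) :
    orderAt (topZeta d T ν) (-3 / d) < 0 := by
  have hd0 : d ≠ 0 := by omega
  refine orderAt_neg_of_mul_eq (topZeta_mul_zetaDenom d T ν) (eval_zetaDenom d T hd0) ?_
  by_cases hroot : ∃ k ∈ T, 3 * k = 2 * d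
  · obtain ⟨k, hk, hkd⟩ := hroot
    exact eval_zetaNumer_ne_zero_of_root hd hk (hT k hk).1 (hT k hk).2.2 hkd
  · push Not at hroot
    have hne : ∀ m ∈ T, (m : ℚ) * (-3 / d) + 2 ≠ 0 := fun m hm =>
      (mul_neg_three_div_add_two_eq_zero_iff hd0).not.mpr (hroot m hm)
    rw [eval_zetaNumer_of_forall_ne_zero hne, chi_add_sum_eq_sum_poleWeight hd0 hroot hpairs]
    exact mul_ne_zero (prod_ne_zero_iff.mpr hne)
      (sum_poleWeight_ne_zero hd hT hroot hpairs hjoin hunique)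

theorem orderAt_topZeta_neg {d : ℕ} {S : Finset ℕ} {ν : ℕ → ℕ} (hd : 2 ≤ d)
    (hS : ∀ m ∈ S, ν m ≠ 0 → 2 ≤ m ∧ m + 2 ≤ d)
    (hpairs : ∑ m ∈ S, (ν m : ℚ) * m * (m - 1) = d * (d - 1))
    (hjoin : ∀ m ∈ S, ∀ k ∈ S, ν m ≠ 0 → ν k ≠ 0 → m ≠ k → m + k ≤ d + 1)
    (hunique : ∀ k ∈ S, d + 1 < 2 * k → ν k ≤ 1) :
    orderAt (topZeta d S ν) (-3 / d) < 0 := by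
  rw [← topZeta_filter_ne_zero]
  refine orderAt_topZeta_neg_of_support hd (fun m hm => ?_) ?_ (fun m hm k hk => ?_)
    (fun k hk hk2 => ?_)
  · rw [mem_filter] at hm
    exact ⟨(hS m hm.1 hm.2).1, (hS m hm.1 hm.2).2, hm.2⟩
  · rwa [sum_filter_of_ne (p := fun m => ν m ≠ 0) fun m _ hm hν0 => hm (by simp [hν0])]
  · rw [mem_filter] at hm hk
    exact hjoin m hm.1 k hk.1 hm.2 hk.2
  · rw [mem_filter] at hk
    have := hunique k hk.1 hk2
    omega

/-- Proposition 1.8: for an indecomposable essential reduced central hyperplane arrangement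
in `ℂ³` of degree `d` — i.e. a finite set `L` of `d ≥ 2` distinct lines in `ℙ²(ℂ)` (2-dimensional
linear subspaces of `ℂ³`) such that every point (1-dimensional subspace) lies on at most `d - 2`
of them — its topological local zeta function
`Z(s) = (1/(ds+3)) · (χ₁ + χ₂/(s+1) + Σₘ (2 - m + m/(s+1)) νₘ/(ms+2))` has a pole at
`s = -3/d`, where `νₘ` is the number of points of multiplicity `m`,
`χ₁ = 3 - 2d + Σₘ (m-1)νₘ` and `χ₂ = 2d - Σₘ m νₘ`. -/
theorem statement5 (L : Finset (Submodule ℂ (Fin 3 → ℂ)))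
    (d : ℕ) (hdcard : d = L.card) (hd2 : 2 ≤ d)
    (hL : ∀ ℓ ∈ L, finrank ℂ ℓ = 2)
    (hind : ∀ p : Submodule ℂ (Fin 3 → ℂ), finrank ℂ p = 1 →
      {ℓ : Submodule ℂ (Fin 3 → ℂ) | ℓ ∈ L ∧ p ≤ ℓ}.ncard ≤ d - 2)
    (ν : ℕ → ℕ)
    (hν : ∀ m, 2 ≤ m → ν m =
      {p : Submodule ℂ (Fin 3 → ℂ) | finrank ℂ p = 1 ∧
        {ℓ : Submodule ℂ (Fin 3 → ℂ) | ℓ ∈ L ∧ p ≤ ℓ}.ncard = m}.ncard)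
    (χ1 χ2 : ℚ)
    (hχ1 : χ1 = 3 - 2 * (d : ℚ) + ∑ m ∈ Finset.Icc 2 d, ((m : ℚ) - 1) * (ν m : ℚ))
    (hχ2 : χ2 = 2 * (d : ℚ) - ∑ m ∈ Finset.Icc 2 d, (m : ℚ) * (ν m : ℚ))
    (Z : RatFunc ℚ)
    (hZ : Z = 1 / ((d : RatFunc ℚ) * RatFunc.X + 3) *
      (RatFunc.C χ1 + RatFunc.C χ2 / (RatFunc.X + 1) +
        ∑ m ∈ Finset.Icc 2 d,
          ((2 : RatFunc ℚ) - (m : RatFunc ℚ) + (m : RatFunc ℚ) / (RatFunc.X + 1)) *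
            (ν m : RatFunc ℚ) / ((m : RatFunc ℚ) * RatFunc.X + 2))) :
    orderAt Z (-3 / (d : ℚ)) < 0 := by
  classical
  subst hdcard hχ1 hχ2 hZ
  have hV : finrank ℂ (Fin 3 → ℂ) = 3 := finrank_fin_fun ℂ
  have hνL : ∀ m ∈ Icc 2 #L, ν m = LineArrangement.numPoints L m :=
    fun m hm => hν m (mem_Icc.mp hm).1
  refine orderAt_topZeta_neg (S := Icc 2 #L) hd2 (fun m hm hνm => ⟨(mem_Icc.mp hm).1, ?_⟩) ?_
    (fun m hm k hk hνm hνk => ?_) (fun k hk hk2 => ?_)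
  · obtain ⟨p, hp, rfl⟩ := LineArrangement.exists_of_numPoints_ne_zero (hνL m hm ▸ hνm)
    have : LineArrangement.mult L p ≤ #L - 2 := hind p hp
    omega
  · rw [← LineArrangement.sum_numPoints_mul_mul_pred hL hV]
    exact sum_congr rfl fun m hm => by rw [hνL m hm]
  · exact LineArrangement.add_le_of_numPoints_ne_zero hL (hνL m hm ▸ hνm) (hνL k hk ▸ hνk)
  · exact hνL k hk ▸ LineArrangement.numPoints_le_one hL hk2
end

section
/- Let a, e be real numbers with e > 0 and a > e + 1, and let ν : ℕ → ℕ be a finitely supported function such that ν_m = 0 unless 2 ≤ m ≤ a − e + 1, and such that Σ_m m(m−1)·ν_m = 3a(3a−1) − (2a+e)(2a+e−1). Then (2a+e)(2a+e−1)/e > 3(3a−1) + Σ_m (m(m−1)/(2a−m))·ν_m. (The key combinatorial inequality in the proof of Proposition 1.8.) -/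
/-!
Every multiplicity `m` in the support satisfies `2a - m ≥ a + e - 1`, so the weighted sum of
`m(m-1)/(2a-m)` is at most `Σ m(m-1)νₘ / (a+e-1)`, which the pair count evaluates explicitly.
What remains is an inequality between rational functions of `a` and `e` whose difference is
`2(a-e)(a-e-1)(2a+e-1) / (e(a+e-1))`, positive since `a > e + 1`.
-/

theorem Finset.sum_div_mul_le_sum_mul_div {ι : Type*} (s : Finset ι) (f d w : ι → ℝ) {c : ℝ}
    (hc : 0 < c) (hf : ∀ i ∈ s, 0 ≤ f i * w i) (hd : ∀ i ∈ s, c ≤ d i) :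
    ∑ i ∈ s, f i / d i * w i ≤ (∑ i ∈ s, f i * w i) / c := by
  rw [Finset.sum_div]
  gcongr with i hi
  rw [div_mul_eq_mul_div]
  exact div_le_div_of_nonneg_left (hf i hi) hc (hd i hi)

theorem pair_count_bound_lt {a e : ℝ} (he : 0 < e) (ha : e + 1 < a) :
    3 * (3 * a - 1) + (3 * a * (3 * a - 1) - (2 * a + e) * (2 * a + e - 1)) / (a + e - 1)
      < (2 * a + e) * (2 * a + e - 1) / e := by
  have hc : 0 < a + e - 1 := by linarith
  have hdiff : (2 * a + e) * (2 * a + e - 1) / e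
      - (3 * (3 * a - 1) + (3 * a * (3 * a - 1) - (2 * a + e) * (2 * a + e - 1)) / (a + e - 1))
      = 2 * (a - e) * (a - e - 1) * (2 * a + e - 1) / (e * (a + e - 1)) := by
    field_simp
    ring
  rw [← sub_pos, hdiff]
  have : 0 < a - e - 1 := by linarith
  have : 0 < 2 * a + e - 1 := by linarith
  have : 0 < a - e := by linarith
  positivity

/-- The key combinatorial inequality in the proof of Proposition 1.8: for real `a, e` with
`e > 0`, `a > e + 1`, and a finitely supported `ν : ℕ → ℕ` supported in `[2, a - e + 1]`
with `Σₘ m(m-1)νₘ = 3a(3a-1) - (2a+e)(2a+e-1)`, one has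
`(2a+e)(2a+e-1)/e > 3(3a-1) + Σₘ (m(m-1)/(2a-m))νₘ`. -/
theorem statement7 (a e : ℝ) (he : 0 < e) (ha : e + 1 < a) (ν : ℕ →₀ ℕ)
    (hsupp : ∀ m, ν m ≠ 0 → 2 ≤ m ∧ (m : ℝ) ≤ a - e + 1)
    (hsum : ∑ m ∈ ν.support, (m : ℝ) * ((m : ℝ) - 1) * (ν m : ℝ)
      = 3 * a * (3 * a - 1) - (2 * a + e) * (2 * a + e - 1)) :
    3 * (3 * a - 1) + ∑ m ∈ ν.support, (m : ℝ) * ((m : ℝ) - 1) / (2 * a - (m : ℝ)) * (ν m : ℝ)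
      < (2 * a + e) * (2 * a + e - 1) / e := by
  have hweights : ∀ m ∈ ν.support, 0 ≤ (m : ℝ) * ((m : ℝ) - 1) * (ν m : ℝ) := fun m hm => by
    have h2 : (2 : ℝ) ≤ m := by exact_mod_cast (hsupp m (Finsupp.mem_support_iff.mp hm)).1
    exact mul_nonneg (mul_nonneg (by positivity) (by linarith)) (by positivity)
  have hdenoms : ∀ m ∈ ν.support, a + e - 1 ≤ 2 * a - (m : ℝ) := fun m hm => by
    linarith [(hsupp m (Finsupp.mem_support_iff.mp hm)).2]
  calc 3 * (3 * a - 1) + ∑ m ∈ ν.support, (m : ℝ) * ((m : ℝ) - 1) / (2 * a - (m : ℝ)) * (ν m : ℝ)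
      ≤ 3 * (3 * a - 1) + (3 * a * (3 * a - 1) - (2 * a + e) * (2 * a + e - 1)) / (a + e - 1) := by
        rw [← hsum]
        gcongr
        exact Finset.sum_div_mul_le_sum_mul_div _ _ _ _ (by linarith) hweights hdenoms
    _ < (2 * a + e) * (2 * a + e - 1) / e := pair_count_bound_lt he ha
end

section
/- Define Φ ∈ ℚ(s) by Φ(s) = 1 − 2/(s+1) − 1/(2s+1) − 1/(4s+1) + (−1 + 3/(s+1))·(1/(3s+2)) + (−1 + 1/(s+1) + 1/(2s+1) + 1/(4s+1))·(1/(7s+2)) + (2/(s+1))·(1/(2s+1) + 1/(4s+1)). Then Φ is defined at s = −1/3 and Φ(−1/3) = 0; consequently the rational function Z(s) = Φ(s)/(9s+3) has no pole at s = −1/3. (Example A.1 of the Appendix: for the non-reduced arrangement f = xy(x−y)z²(x−z)⁴ in ℂ³, with n = 3 and d = 9, the candidate pole −n/d = −1/3 of the topological local zeta function cancels.) -/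
/-!
Combining the partial fractions, `Φ(s) = (3s+1) R(s) / Q(s)` with
`R = 56s⁴ - 48s³ - 21s² + 36s + 12` and `Q = (s+1)(2s+1)(4s+1)(3s+2)(7s+2)`. Since
`Q(-1/3) = 2/81 ≠ 0`, `Φ` is regular at `-1/3` and vanishes there, and the factor `3s+1`
cancels `9s+3 = 3(3s+1)`, so that `Z = R / (3Q)` is regular at `-1/3` as well.
-/

open Polynomial

local notation "X" => (RatFunc.X : RatFunc ℚ)

section

variable {K : Type*} [Field K] {Z : RatFunc K} {p q : K[X]} {α : K}

theorem RatFunc.algebraMap_ne_zero_of_eval_ne_zero (h : p.eval α ≠ 0) :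
    algebraMap K[X] (RatFunc K) p ≠ 0 :=
  RatFunc.algebraMap_ne_zero fun hp => h (by simp [hp])

theorem RatFunc.denom_eval_ne_zero_of_eq_div
    (hZ : Z = algebraMap K[X] (RatFunc K) p / algebraMap K[X] (RatFunc K) q)
    (hq : q.eval α ≠ 0) : Z.denom.eval α ≠ 0 := by
  obtain ⟨c, hc⟩ := (RatFunc.denom_dvd fun h => hq (by simp [h])).mpr ⟨p, hZ⟩
  intro h
  apply hq
  rw [hc, Polynomial.eval_mul, h, zero_mul]

theorem RatFunc.eval_id_of_eq_div
    (hZ : Z = algebraMap K[X] (RatFunc K) p / algebraMap K[X] (RatFunc K) q)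
    (hq : q.eval α ≠ 0) : RatFunc.eval (RingHom.id K) α Z = p.eval α / q.eval α := by
  have hcross := congrArg (Polynomial.eval α)
    ((RatFunc.num_mul_eq_mul_denom_iff fun h => hq (by simp [h])).mpr hZ)
  rw [Polynomial.eval_mul, Polynomial.eval_mul] at hcross
  rw [RatFunc.eval, eval₂_id, eval₂_id,
    div_eq_div_iff (RatFunc.denom_eval_ne_zero_of_eq_div hZ hq) hq, hcross]

end

theorem orderAt_nonneg_of_denom_eval_ne_zero {Z : RatFunc ℚ} {α : ℚ}
    (h : Z.denom.eval α ≠ 0) : 0 ≤ orderAt Z α := by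
  simp [orderAt, rootMultiplicity_eq_zero h]

theorem exampleA1_partialFractions_eq_div {F : Type*} [Field F] (x : F)
    (hQ : (x + 1) * (2 * x + 1) * (4 * x + 1) * (3 * x + 2) * (7 * x + 2) ≠ 0) :
    1 - 2 / (x + 1) - 1 / (2 * x + 1) - 1 / (4 * x + 1)
        + (-1 + 3 / (x + 1)) * (1 / (3 * x + 2))
        + (-1 + 1 / (x + 1) + 1 / (2 * x + 1) + 1 / (4 * x + 1)) * (1 / (7 * x + 2))
        + (2 / (x + 1)) * (1 / (2 * x + 1) + 1 / (4 * x + 1))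
      = (3 * x + 1) * (56 * x ^ 4 - 48 * x ^ 3 - 21 * x ^ 2 + 36 * x + 12)
        / ((x + 1) * (2 * x + 1) * (4 * x + 1) * (3 * x + 2) * (7 * x + 2)) := by
  simp only [ne_eq, mul_eq_zero, not_or] at hQ
  obtain ⟨⟨⟨⟨h1, h2⟩, h4⟩, h3⟩, h7⟩ := hQ
  -- `field_simp` only recognises these denominators as nonzero in the form `x * c + d`.
  rw [mul_comm 4 x] at h4 ⊢
  rw [mul_comm 3 x] at h3 ⊢
  rw [mul_comm 7 x] at h7 ⊢
  field_simp
  ring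

noncomputable def exampleA1Num : ℚ[X] :=
  56 * Polynomial.X ^ 4 - 48 * Polynomial.X ^ 3 - 21 * Polynomial.X ^ 2 + 36 * Polynomial.X + 12

noncomputable def exampleA1Den : ℚ[X] :=
  (Polynomial.X + 1) * (2 * Polynomial.X + 1) * (4 * Polynomial.X + 1)
    * (3 * Polynomial.X + 2) * (7 * Polynomial.X + 2)

/-- Example A.1 of the Appendix (for `f = xy(x-y)z²(x-z)⁴`, `n = 3`, `d = 9`): the rational
function `Φ` is defined at `s = -1/3` with `Φ(-1/3) = 0`, hence `Z(s) = Φ(s)/(9s+3)` has no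
pole at `s = -1/3`, i.e. the candidate pole `-n/d = -1/3` cancels. -/
theorem statement14 (Φ Z : RatFunc ℚ)
    (hΦ : Φ = 1 - 2 / (X + 1) - 1 / (2 * X + 1) - 1 / (4 * X + 1)
      + (-1 + 3 / (X + 1)) * (1 / (3 * X + 2))
      + (-1 + 1 / (X + 1) + 1 / (2 * X + 1) + 1 / (4 * X + 1)) * (1 / (7 * X + 2))
      + (2 / (X + 1)) * (1 / (2 * X + 1) + 1 / (4 * X + 1)))
    (hZ : Z = Φ / (9 * X + 3)) :
    Φ.denom.eval (-1/3) ≠ 0 ∧ RatFunc.eval (RingHom.id ℚ) (-1/3) Φ = 0 ∧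
      0 ≤ orderAt Z (-1/3) := by
  have hQ : exampleA1Den.eval (-1/3) ≠ 0 := by norm_num [exampleA1Den]
  have hQ3 : (3 * exampleA1Den).eval (-1/3) ≠ 0 := by norm_num [exampleA1Den]
  have hQX := RatFunc.algebraMap_ne_zero_of_eval_ne_zero hQ
  have hL : algebraMap ℚ[X] (RatFunc ℚ) (3 * Polynomial.X + 1) ≠ 0 :=
    RatFunc.algebraMap_ne_zero_of_eval_ne_zero (α := 0) (by simp)
  have hΦ' : Φ = algebraMap ℚ[X] (RatFunc ℚ) ((3 * Polynomial.X + 1) * exampleA1Num)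
      / algebraMap ℚ[X] (RatFunc ℚ) exampleA1Den := by
    rw [hΦ, exampleA1_partialFractions_eq_div X (by simpa [exampleA1Den, map_ofNat] using hQX)]
    simp [exampleA1Num, exampleA1Den, map_ofNat]
  have hZ' : Z = algebraMap ℚ[X] (RatFunc ℚ) exampleA1Num
      / algebraMap ℚ[X] (RatFunc ℚ) (3 * exampleA1Den) := by
    have h93 : 9 * X + 3 = 3 * algebraMap ℚ[X] (RatFunc ℚ) (3 * Polynomial.X + 1) := by
      simp only [map_add, map_mul, map_ofNat, map_one, RatFunc.algebraMap_X]
      ring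
    rw [hZ, hΦ', h93, map_mul, map_mul, map_ofNat]
    field_simp
  refine ⟨RatFunc.denom_eval_ne_zero_of_eq_div hΦ' hQ, ?_,
    orderAt_nonneg_of_denom_eval_ne_zero (RatFunc.denom_eval_ne_zero_of_eq_div hZ' hQ3)⟩
  rw [RatFunc.eval_id_of_eq_div hΦ' hQ, eval_mul]
  norm_num
end

section
/- Define rational functions Ψ₀(s) = (4 − 9/(s+1) + 5/(s+1)² + (−3 + 5/(s+1))·(1/(5s+2)))·(1 − 3/(s+1) + 3/(s+1)²), Ψ₁(s) = (1/(7s+3))·(4 − 13/(s+1) + 11/(s+1)² + (−3 + 5/(s+1))·(1/(5s+2)))·(−1 + 3/(s+1)), and Ψ₂(s) = (1/(4s+3))·(1 − 4/(s+1) + 6/(s+1)²)·(−4 + 6/(s+1)). Then all three are defined at s = −1/2, with Ψ₀(−1/2) = −56, Ψ₁(−1/2) = −80, Ψ₂(−1/2) = 136, so that Ψ₀(−1/2) + Ψ₁(−1/2) + Ψ₂(−1/2) = 0; consequently the rational function Z(s) = (Ψ₀(s) + Ψ₁(s) + Ψ₂(s))/(10s+5) has no pole at s = −1/2. (Example A.2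 of the Appendix: for the reduced arrangement f = (x−y)(x−2y)(x−3y)(x−4y)(x−5y)(x+y+z)zuv(u+v+z) in ℂ⁵, with n = 5 and d = 10, the candidate pole −n/d = −1/2 of the topological local zeta function cancels.) -/
open Polynomial

local notation "X" => (RatFunc.X : RatFunc ℚ)

/-!
Clearing denominators writes each `Ψᵢ` as `pᵢ / qᵢ` with `qᵢ` a product of the linear forms
`s + 1`, `5s + 2`, `7s + 3`, `4s + 3`, none of which vanishes at `s = -1/2`; this gives the
values `Ψᵢ(-1/2) = pᵢ(-1/2) / qᵢ(-1/2)`. Their sum vanishes, so the numerator of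
`Ψ₀ + Ψ₁ + Ψ₂` is divisible by `2s + 1`, which cancels that factor of `10s + 5`: `Z` is again a
quotient of polynomials whose denominator does not vanish at `-1/2`, hence has order `≥ 0` there.
-/

namespace RatFunc

variable {K : Type*} [Field K]

theorem C_mul_X_add_C_ne_zero (a : K) {b : K} (hb : b ≠ 0) :
    RatFunc.C a * (RatFunc.X : RatFunc K) + RatFunc.C b ≠ 0 := by
  rw [← algebraMap_C, ← algebraMap_C, ← algebraMap_X, ← map_mul, ← map_add]
  exact algebraMap_ne_zero fun h => hb (by simpa using congrArg (Polynomial.eval 0) h)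

theorem denom_eval_ne_zero_of_eq_div_s15 {f : RatFunc K} {p q : K[X]} {a : K} (hq : q.eval a ≠ 0)
    (hf : f = algebraMap _ _ p / algebraMap _ _ q) : f.denom.eval a ≠ 0 := by
  obtain ⟨r, hr⟩ := (denom_dvd (fun h => hq (by simp [h]))).mpr ⟨p, hf⟩
  exact fun h => hq (by rw [hr, Polynomial.eval_mul, h, zero_mul])

theorem eval_eq_div_of_eq_div {f : RatFunc K} {p q : K[X]} {a : K} (hq : q.eval a ≠ 0)
    (hf : f = algebraMap _ _ p / algebraMap _ _ q) :
    eval (RingHom.id K) a f = p.eval a / q.eval a := by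
  have hcross : f.num * q = p * f.denom :=
    (num_mul_eq_mul_denom_iff fun h => hq (by simp [h])).mpr hf
  have hcross_eval := congrArg (Polynomial.eval a) hcross
  rw [Polynomial.eval_mul, Polynomial.eval_mul] at hcross_eval
  change f.num.eval a / f.denom.eval a = _
  rw [div_eq_div_iff (denom_eval_ne_zero_of_eq_div_s15 hq hf) hq]
  linear_combination hcross_eval

end RatFunc

-- Stated in the shape `field_simp` normalizes `m * X + n` to, so that it can discharge it.
theorem X_mul_ofNat_add_ofNat_ne_zero (m n : ℕ) [m.AtLeastTwo] [n.AtLeastTwo] :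
    (X * no_index (OfNat.ofNat m) + no_index (OfNat.ofNat n) : RatFunc ℚ) ≠ 0 := by
  simpa [mul_comm] using
    RatFunc.C_mul_X_add_C_ne_zero (OfNat.ofNat m : ℚ) (b := OfNat.ofNat n) (by simp)

theorem X_add_one_ne_zero : (X + 1 : RatFunc ℚ) ≠ 0 := by
  simpa using RatFunc.C_mul_X_add_C_ne_zero (1 : ℚ) one_ne_zero

noncomputable section

def Ψ₀num : ℚ[X] :=
  20 * Polynomial.X ^ 5 - 20 * Polynomial.X ^ 4 + 17 * Polynomial.X ^ 3 + 5 * Polynomial.X ^ 2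
    - 5 * Polynomial.X + 2

def Ψ₀den : ℚ[X] := (Polynomial.X + 1) ^ 4 * (5 * Polynomial.X + 2)

def Ψ₁num : ℚ[X] :=
  -20 * Polynomial.X ^ 4 + 60 * Polynomial.X ^ 3 - 39 * Polynomial.X ^ 2 - 8 * Polynomial.X + 12

def Ψ₁den : ℚ[X] := (7 * Polynomial.X + 3) * (Polynomial.X + 1) ^ 3 * (5 * Polynomial.X + 2)

def Ψ₂num : ℚ[X] := -4 * Polynomial.X ^ 3 + 10 * Polynomial.X ^ 2 - 16 * Polynomial.X + 6

def Ψ₂den : ℚ[X] := (4 * Polynomial.X + 3) * (Polynomial.X + 1) ^ 3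

def Znum : ℚ[X] :=
  280 * Polynomial.X ^ 6 - 200 * Polynomial.X ^ 5 + 195 * Polynomial.X ^ 4
    + 235 * Polynomial.X ^ 3 - 335 * Polynomial.X ^ 2 + 15 * Polynomial.X + 90

def Zden : ℚ[X] :=
  5 * (Polynomial.X + 1) ^ 4 * (5 * Polynomial.X + 2) * (7 * Polynomial.X + 3)
    * (4 * Polynomial.X + 3)

end

theorem Ψ₀_eq_div :
    (4 - 9 / (X + 1) + 5 / (X + 1) ^ 2 + (-3 + 5 / (X + 1)) * (1 / (5 * X + 2)))
      * (1 - 3 / (X + 1) + 3 / (X + 1) ^ 2)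
      = algebraMap ℚ[X] (RatFunc ℚ) Ψ₀num / algebraMap ℚ[X] (RatFunc ℚ) Ψ₀den := by
  simp only [Ψ₀num, Ψ₀den, map_add, map_sub, map_mul, map_pow, map_ofNat, map_one,
    RatFunc.algebraMap_X]
  field_simp [X_add_one_ne_zero, X_mul_ofNat_add_ofNat_ne_zero]
  ring

theorem Ψ₁_eq_div :
    (1 / (7 * X + 3)) *
      ((4 - 13 / (X + 1) + 11 / (X + 1) ^ 2 + (-3 + 5 / (X + 1)) * (1 / (5 * X + 2)))
        * (-1 + 3 / (X + 1)))
      = algebraMap ℚ[X] (RatFunc ℚ) Ψ₁num / algebraMap ℚ[X] (RatFunc ℚ) Ψ₁den := by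
  simp only [Ψ₁num, Ψ₁den, map_add, map_sub, map_mul, map_pow, map_ofNat, map_one, map_neg,
    RatFunc.algebraMap_X]
  field_simp [X_add_one_ne_zero, X_mul_ofNat_add_ofNat_ne_zero]
  ring

theorem Ψ₂_eq_div :
    (1 / (4 * X + 3)) * ((1 - 4 / (X + 1) + 6 / (X + 1) ^ 2) * (-4 + 6 / (X + 1)))
      = algebraMap ℚ[X] (RatFunc ℚ) Ψ₂num / algebraMap ℚ[X] (RatFunc ℚ) Ψ₂den := by
  simp only [Ψ₂num, Ψ₂den, map_add, map_sub, map_mul, map_pow, map_ofNat, map_one, map_neg,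
    RatFunc.algebraMap_X]
  field_simp [X_add_one_ne_zero, X_mul_ofNat_add_ofNat_ne_zero]
  ring

theorem Ψ_sum_div_eq_div :
    (algebraMap ℚ[X] (RatFunc ℚ) Ψ₀num / algebraMap ℚ[X] (RatFunc ℚ) Ψ₀den
      + algebraMap ℚ[X] (RatFunc ℚ) Ψ₁num / algebraMap ℚ[X] (RatFunc ℚ) Ψ₁den
      + algebraMap ℚ[X] (RatFunc ℚ) Ψ₂num / algebraMap ℚ[X] (RatFunc ℚ) Ψ₂den)
      / (10 * X + 5)
      = algebraMap ℚ[X] (RatFunc ℚ) Znum / algebraMap ℚ[X] (RatFunc ℚ) Zden := by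
  simp only [Ψ₀num, Ψ₀den, Ψ₁num, Ψ₁den, Ψ₂num, Ψ₂den, Znum, Zden, map_add, map_sub,
    map_mul, map_pow, map_ofNat, map_one, map_neg, RatFunc.algebraMap_X]
  field_simp [X_add_one_ne_zero, X_mul_ofNat_add_ofNat_ne_zero]
  ring

/-- Example A.2 of the Appendix (for the reduced arrangement
`f = (x-y)(x-2y)(x-3y)(x-4y)(x-5y)(x+y+z)zuv(u+v+z)` in `ℂ⁵`, `n = 5`, `d = 10`):
the rational functions `Ψ₀, Ψ₁, Ψ₂` are defined at `s = -1/2` with values `-56`, `-80`, `136`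
(summing to `0`), hence `Z(s) = (Ψ₀(s)+Ψ₁(s)+Ψ₂(s))/(10s+5)` has no pole at `s = -1/2`,
i.e. the candidate pole `-n/d = -1/2` cancels. -/
theorem statement15 (Ψ₀ Ψ₁ Ψ₂ Z : RatFunc ℚ)
    (hΨ₀ : Ψ₀ = (4 - 9 / (X + 1) + 5 / (X + 1) ^ 2 + (-3 + 5 / (X + 1)) * (1 / (5 * X + 2)))
      * (1 - 3 / (X + 1) + 3 / (X + 1) ^ 2))
    (hΨ₁ : Ψ₁ = (1 / (7 * X + 3)) *
      ((4 - 13 / (X + 1) + 11 / (X + 1) ^ 2 + (-3 + 5 / (X + 1)) * (1 / (5 * X + 2)))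
        * (-1 + 3 / (X + 1))))
    (hΨ₂ : Ψ₂ = (1 / (4 * X + 3)) *
      ((1 - 4 / (X + 1) + 6 / (X + 1) ^ 2) * (-4 + 6 / (X + 1))))
    (hZ : Z = (Ψ₀ + Ψ₁ + Ψ₂) / (10 * X + 5)) :
    Ψ₀.denom.eval (-1/2) ≠ 0 ∧ Ψ₁.denom.eval (-1/2) ≠ 0 ∧ Ψ₂.denom.eval (-1/2) ≠ 0 ∧
      RatFunc.eval (RingHom.id ℚ) (-1/2) Ψ₀ = -56 ∧
      RatFunc.eval (RingHom.id ℚ) (-1/2) Ψ₁ = -80 ∧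
      RatFunc.eval (RingHom.id ℚ) (-1/2) Ψ₂ = 136 ∧
      RatFunc.eval (RingHom.id ℚ) (-1/2) Ψ₀ + RatFunc.eval (RingHom.id ℚ) (-1/2) Ψ₁ +
        RatFunc.eval (RingHom.id ℚ) (-1/2) Ψ₂ = 0 ∧
      0 ≤ orderAt Z (-1/2) := by
  have e₀ := hΨ₀.trans Ψ₀_eq_div
  have e₁ := hΨ₁.trans Ψ₁_eq_div
  have e₂ := hΨ₂.trans Ψ₂_eq_div
  have eZ : Z = algebraMap ℚ[X] (RatFunc ℚ) Znum / algebraMap ℚ[X] (RatFunc ℚ) Zden := by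
    rw [hZ, e₀, e₁, e₂, Ψ_sum_div_eq_div]
  have hd₀ : Ψ₀den.eval (-1/2) ≠ 0 := by norm_num [Ψ₀den]
  have hd₁ : Ψ₁den.eval (-1/2) ≠ 0 := by norm_num [Ψ₁den]
  have hd₂ : Ψ₂den.eval (-1/2) ≠ 0 := by norm_num [Ψ₂den]
  have hdZ : Zden.eval (-1/2) ≠ 0 := by norm_num [Zden]
  have v₀ : RatFunc.eval (RingHom.id ℚ) (-1/2) Ψ₀ = -56 := by
    rw [RatFunc.eval_eq_div_of_eq_div hd₀ e₀]; norm_num [Ψ₀num, Ψ₀den]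
  have v₁ : RatFunc.eval (RingHom.id ℚ) (-1/2) Ψ₁ = -80 := by
    rw [RatFunc.eval_eq_div_of_eq_div hd₁ e₁]; norm_num [Ψ₁num, Ψ₁den]
  have v₂ : RatFunc.eval (RingHom.id ℚ) (-1/2) Ψ₂ = 136 := by
    rw [RatFunc.eval_eq_div_of_eq_div hd₂ e₂]; norm_num [Ψ₂num, Ψ₂den]
  exact ⟨RatFunc.denom_eval_ne_zero_of_eq_div_s15 hd₀ e₀,
    RatFunc.denom_eval_ne_zero_of_eq_div_s15 hd₁ e₁, RatFunc.denom_eval_ne_zero_of_eq_div_s15 hd₂ e₂,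
    v₀, v₁, v₂, by rw [v₀, v₁, v₂]; norm_num,
    orderAt_nonneg_of_denom_eval_ne_zero (RatFunc.denom_eval_ne_zero_of_eq_div_s15 hdZ eZ)⟩
end
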